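/- arXiv:1707.05294 — 6 statements merged into one kernel-verified Lean document; each statement's English description precedes it below -/
import Mathlib

section
/- Let S be a 5-pole obtained by deleting a path P_3 from a snark, with dangling edges A, B, C, B', A' as usual. In any proper 3-edge-coloring of S, if A and B receive different colors, then A' and B' receive the same color, and if A and B receive the same color, then A' and B' receive different colors. -/
/-- A coloring is proper on the edge set `E` away from the vertex set `X` if
any two distinct edges of `E` sharing an endpoint outside `X` get distinct colors. -/
def ProperOn {V : Type*} (E : Set (Sym2 V)) (X : Set V) (c : Sym2 V → Fin 3) : Prop :=
  ∀ e₁ ∈ E, ∀ e₂ ∈ E, e₁ ≠ e₂ → (∃ v, v ∉ X ∧ v ∈ e₁ ∧ v ∈ e₂) → c e₁ ≠ c e₂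

/-!
Identify the three colours with the non-zero elements of the Klein four-group `(ℤ/2)²`; three
colours are pairwise distinct exactly when they sum to zero. Summing these sums over all vertices
other than `s, w, t` counts every edge inside the 5-pole twice, so the colours of the five dangling
edges sum to zero. If `A' = B'`, this leaves `A + B = C ≠ 0`, so `A ≠ B`. If `A ≠ B` and `A' ≠ B'`,
colour `sw` with `A + B` and `wt` with `A' + B'`: the same identity makes the colouring proper at
`w`, which gives a 3-edge-colouring of the snark.
-/

def toKlein : Fin 3 → ZMod 2 × ZMod 2
  | 0 => (1, 0)
  | 1 => (0, 1)
  | 2 => (1, 1)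

theorem sum_toKlein : ∑ x : Fin 3, toKlein x = 0 := by decide

theorem toKlein_add_add_eq_zero_iff {x y z : Fin 3} :
    toKlein x + toKlein y + toKlein z = 0 ↔ x ≠ y ∧ x ≠ z ∧ y ≠ z := by
  revert x y z; decide

theorem exists_toKlein_eq_add_of_ne {x y : Fin 3} (h : x ≠ y) :
    ∃ z, toKlein z = toKlein x + toKlein y := by
  revert x y; decide

namespace SimpleGraph

variable {V : Type*} {G : SimpleGraph V}

variable (G) in
def ProperAt (c : Sym2 V → Fin 3) (v : V) : Prop :=
  Set.InjOn (fun u => c s(v, u)) (G.neighborSet v)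

theorem properOn_edgeSet_of_properAt {c : Sym2 V → Fin 3} (h : ∀ v, G.ProperAt c v) :
    ProperOn G.edgeSet ∅ c := by
  rintro e₁ he₁ e₂ he₂ hne ⟨v, -, hv₁, hv₂⟩ heq
  obtain ⟨u₁, rfl⟩ := Sym2.mem_iff_exists.1 hv₁
  obtain ⟨u₂, rfl⟩ := Sym2.mem_iff_exists.1 hv₂
  exact hne (congrArg _ (h v he₁ he₂ heq))

theorem _root_.ProperOn.properAt {E : Set (Sym2 V)} {X : Set V} {c : Sym2 V → Fin 3}
    (hc : ProperOn E X c) {v : V} (hv : v ∉ X) (hE : ∀ u, G.Adj v u → s(v, u) ∈ E) :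
    G.ProperAt c v := by
  intro u hu u' hu' heq
  by_contra hne
  exact hc _ (hE u hu) _ (hE u' hu') (mt Sym2.congr_right.1 hne)
    ⟨v, hv, Sym2.mem_mk_left _ _, Sym2.mem_mk_left _ _⟩ heq

variable [Fintype V] [DecidableRel G.Adj]

theorem sum_sum_neighborFinset_eq_zero {M : Type*} [AddCommMonoid M] (hM : ∀ z : M, z + z = 0)
    (g : Sym2 V → M) : ∑ v, ∑ u ∈ G.neighborFinset v, g s(v, u) = 0 := by
  rw [Finset.sum_sigma']
  refine Finset.sum_involution (fun p _ => ⟨p.2, p.1⟩) (fun p _ => ?_) (fun p hp _ h => ?_)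
    (fun p hp => ?_) (fun _ _ => rfl)
  · rw [Sym2.eq_swap]; exact hM _
  · simp only [Finset.mem_sigma, mem_neighborFinset] at hp
    exact hp.2.ne (congrArg Sigma.fst h).symm
  · simp only [Finset.mem_sigma, mem_neighborFinset, Finset.mem_univ, true_and] at hp ⊢
    exact hp.symm

theorem ProperAt.sum_toKlein_eq_zero {c : Sym2 V → Fin 3} {v : V} (hc : G.ProperAt c v)
    (hdeg : G.degree v = 3) : ∑ u ∈ G.neighborFinset v, toKlein (c s(v, u)) = 0 := by
  classical
  have hinj : Set.InjOn (fun u => c s(v, u)) (G.neighborFinset v) := by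
    rwa [coe_neighborFinset]
  have himg : (G.neighborFinset v).image (fun u => c s(v, u)) = Finset.univ :=
    Finset.eq_univ_of_card _ (by
      rw [Finset.card_image_of_injOn hinj, card_neighborFinset_eq_degree, hdeg, Fintype.card_fin])
  rw [← Finset.sum_image hinj, himg, sum_toKlein]

theorem sum_toKlein_eq_zero_of_properAt_compl [DecidableEq V] {c : Sym2 V → Fin 3} (X : Finset V)
    (hdeg : ∀ v ∉ X, G.degree v = 3) (hc : ∀ v ∉ X, G.ProperAt c v) :
    ∑ x ∈ X, ∑ u ∈ G.neighborFinset x, toKlein (c s(x, u)) = 0 := by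
  have h := G.sum_sum_neighborFinset_eq_zero CharTwo.add_self_eq_zero fun e => toKlein (c e)
  rwa [← Finset.sum_add_sum_compl X, Finset.sum_eq_zero (s := Xᶜ) fun v hv =>
    (hc v (Finset.mem_compl.1 hv)).sum_toKlein_eq_zero (hdeg v (Finset.mem_compl.1 hv)),
    add_zero] at h

variable [DecidableEq V]

theorem neighborFinset_eq_of_degree_eq_three {v a b d : V} (hdeg : G.degree v = 3)
    (ha : G.Adj v a) (hb : G.Adj v b) (hd : G.Adj v d) (hab : a ≠ b) (had : a ≠ d)
    (hbd : b ≠ d) : G.neighborFinset v = {a, b, d} := by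
  refine (Finset.eq_of_subset_of_card_le (by simp [Finset.insert_subset_iff, ha, hb, hd]) ?_).symm
  rw [card_neighborFinset_eq_degree, hdeg, Finset.card_insert_of_notMem (by simp [hab, had]),
    Finset.card_pair hbd]

theorem ne_of_neighborFinset_eq {v a b d : V} (hdeg : G.degree v = 3)
    (hN : G.neighborFinset v = {a, b, d}) : a ≠ b ∧ a ≠ d ∧ b ≠ d := by
  have h := G.card_neighborFinset_eq_degree v
  rw [hN, hdeg] at h
  refine ⟨fun hab => ?_, fun had => ?_, fun hbd => ?_⟩
  · subst hab; have := Finset.card_le_two (a := a) (b := d); simp_all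
  · subst had; have := Finset.card_le_two (a := b) (b := a); simp_all
  · subst hbd; have := Finset.card_le_two (a := a) (b := b); simp_all

theorem sum_neighborFinset_eq_add_add {M : Type*} [AddCommMonoid M] {v a b d : V}
    (hdeg : G.degree v = 3) (hN : G.neighborFinset v = {a, b, d}) (g : V → M) :
    ∑ u ∈ G.neighborFinset v, g u = g a + g b + g d := by
  obtain ⟨hab, had, hbd⟩ := ne_of_neighborFinset_eq hdeg hN
  rw [hN, Finset.sum_insert (by simp [hab, had]), Finset.sum_pair hbd, add_assoc]

theorem properAt_of_neighborFinset_eq {c : Sym2 V → Fin 3} {v a b d : V}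
    (hN : G.neighborFinset v = {a, b, d})
    (h : c s(v, a) ≠ c s(v, b) ∧ c s(v, a) ≠ c s(v, d) ∧ c s(v, b) ≠ c s(v, d)) :
    G.ProperAt c v := by
  rw [ProperAt, ← coe_neighborFinset, hN]
  simp only [Finset.coe_insert, Finset.coe_singleton]
  intro x hx y hy hxy
  simp only [Set.mem_insert_iff, Set.mem_singleton_iff] at hx hy
  rcases hx with rfl | rfl | rfl <;> rcases hy with rfl | rfl | rfl <;> simp_all

theorem sum_toKlein_dangling_eq_zero {s w t sa sb ta tb vC : V} (hcubic : ∀ v, G.degree v = 3)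
    (Ns : G.neighborFinset s = {sa, sb, w}) (Nw : G.neighborFinset w = {s, t, vC})
    (Nt : G.neighborFinset t = {ta, tb, w}) {c : Sym2 V → Fin 3}
    (hc : ∀ v ∉ ({s, w, t} : Finset V), G.ProperAt c v) :
    toKlein (c s(s, sa)) + toKlein (c s(s, sb)) + toKlein (c s(w, vC)) + toKlein (c s(t, ta))
      + toKlein (c s(t, tb)) = 0 := by
  have h := sum_toKlein_eq_zero_of_properAt_compl {s, w, t} (fun v _ => hcubic v) hc
  obtain ⟨hst, -, -⟩ := ne_of_neighborFinset_eq (hcubic w) Nw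
  have hsw : s ≠ w := G.ne_of_adj (by simp [← mem_neighborFinset, Ns])
  have hwt : w ≠ t := (G.ne_of_adj (by simp [← mem_neighborFinset, Nt])).symm
  rw [Finset.sum_insert (by simp [hsw, hst]), Finset.sum_pair hwt,
    sum_neighborFinset_eq_add_add (hcubic s) Ns, sum_neighborFinset_eq_add_add (hcubic w) Nw,
    sum_neighborFinset_eq_add_add (hcubic t) Nt, Sym2.eq_swap (a := w) (b := s),
    Sym2.eq_swap (a := t) (b := w)] at h
  linear_combination h - CharTwo.add_self_eq_zero (toKlein (c s(s, w)))
    - CharTwo.add_self_eq_zero (toKlein (c s(w, t)))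

theorem properOn_edgeSet_update_update {s w t sa sb ta tb vC : V}
    (hcubic : ∀ v, G.degree v = 3)
    (Ns : G.neighborFinset s = {sa, sb, w}) (Nw : G.neighborFinset w = {s, t, vC})
    (Nt : G.neighborFinset t = {ta, tb, w}) {c : Sym2 V → Fin 3}
    (hc : ∀ v ∉ ({s, w, t} : Finset V), G.ProperAt c v) {X Y : Fin 3}
    (hXs : toKlein (c s(s, sa)) + toKlein (c s(s, sb)) + toKlein X = 0)
    (hXY : toKlein X + toKlein Y + toKlein (c s(w, vC)) = 0)
    (hYt : toKlein (c s(t, ta)) + toKlein (c s(t, tb)) + toKlein Y = 0) :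
    ProperOn G.edgeSet ∅ (Function.update (Function.update c s(s, w) X) s(w, t) Y) := by
  obtain ⟨-, hsaw, hsbw⟩ := ne_of_neighborFinset_eq (hcubic s) Ns
  obtain ⟨hst, hsvC, htvC⟩ := ne_of_neighborFinset_eq (hcubic w) Nw
  obtain ⟨-, htaw, htbw⟩ := ne_of_neighborFinset_eq (hcubic t) Nt
  have hsw : s ≠ w := G.ne_of_adj (by simp [← mem_neighborFinset, Ns])
  have hwt : w ≠ t := (G.ne_of_adj (by simp [← mem_neighborFinset, Nt])).symm
  have eSW : Function.update (Function.update c s(s, w) X) s(w, t) Y s(s, w) = X := by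
    rw [Function.update_of_ne (by simp [hsw, hst]), Function.update_self]
  have eWT : Function.update (Function.update c s(s, w) X) s(w, t) Y s(w, t) = Y :=
    Function.update_self ..
  have hfix : ∀ e, e ≠ s(s, w) → e ≠ s(w, t) →
      Function.update (Function.update c s(s, w) X) s(w, t) Y e = c e := fun e h₁ h₂ => by
    rw [Function.update_of_ne h₂, Function.update_of_ne h₁]
  generalize Function.update (Function.update c s(s, w) X) s(w, t) Y = c' at *
  have eA : c' s(s, sa) = c s(s, sa) := hfix _ (by simp [hsw, hsaw]) (by simp [hsw, hst])
  have eB : c' s(s, sb) = c s(s, sb) := hfix _ (by simp [hsw, hsbw]) (by simp [hsw, hst])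
  have eC : c' s(w, vC) = c s(w, vC) :=
    hfix _ (by simp [hsw.symm, hsvC.symm]) (by simp [hwt, htvC.symm])
  have eA' : c' s(t, ta) = c s(t, ta) :=
    hfix _ (by simp [hst.symm, hwt.symm]) (by simp [hwt.symm, htaw])
  have eB' : c' s(t, tb) = c s(t, tb) :=
    hfix _ (by simp [hst.symm, hwt.symm]) (by simp [hwt.symm, htbw])
  rw [← eA, ← eB, ← eSW] at hXs
  rw [← eC, ← eSW, ← eWT, Sym2.eq_swap (a := s) (b := w)] at hXY
  rw [← eA', ← eB', ← eWT, Sym2.eq_swap (a := w) (b := t)] at hYt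
  refine properOn_edgeSet_of_properAt fun v => ?_
  by_cases hv : v ∈ ({s, w, t} : Finset V)
  · simp only [Finset.mem_insert, Finset.mem_singleton] at hv
    rcases hv with rfl | rfl | rfl
    exacts [properAt_of_neighborFinset_eq Ns (toKlein_add_add_eq_zero_iff.1 hXs),
      properAt_of_neighborFinset_eq Nw (toKlein_add_add_eq_zero_iff.1 hXY),
      properAt_of_neighborFinset_eq Nt (toKlein_add_add_eq_zero_iff.1 hYt)]
  · simp only [Finset.mem_insert, Finset.mem_singleton, not_or] at hv
    exact Set.InjOn.congr (hc v (by simp [hv])) fun u _ =>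
      (hfix _ (by simp [hv]) (by simp [hv])).symm

end SimpleGraph

open SimpleGraph

/-- **Match/mismatch property of Loupekine 5-poles.** Let `S` be the 5-pole
obtained from a snark `G` by deleting the path `s — w — t`, with dangling edges
`A = s(s,sa)`, `B = s(s,sb)`, `C = s(w,vC)`, `A' = s(t,ta)`, `B' = s(t,tb)`.
In any proper 3-edge-coloring of `S`, `A` and `B` receive different colors
iff `A'` and `B'` receive the same color. -/
theorem loupekine_match_mismatch {V : Type*} [Fintype V] [DecidableEq V]
    (G : SimpleGraph V) [DecidableRel G.Adj]
    (hcubic : ∀ v : V, G.degree v = 3)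
    (hsnark : ¬ ∃ c : Sym2 V → Fin 3, ProperOn G.edgeSet (∅ : Set V) c)
    (s w t sa sb ta tb vC : V)
    (hsw : G.Adj s w) (hwt : G.Adj w t) (hst : s ≠ t)
    (hsa : G.Adj s sa) (hsb : G.Adj s sb) (hsab : sa ≠ sb)
    (hta : G.Adj t ta) (htb : G.Adj t tb) (htab : ta ≠ tb)
    (hvC : G.Adj w vC)
    (houter : ∀ u ∈ ({sa, sb, ta, tb, vC} : Set V), u ≠ s ∧ u ≠ w ∧ u ≠ t)
    (c : Sym2 V → Fin 3)
    (hc : ProperOn (G.edgeSet \ {s(s, w), s(w, t)}) ({s, w, t} : Set V) c) :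
    c s(s, sa) ≠ c s(s, sb) ↔ c s(t, ta) = c s(t, tb) := by
  simp only [Set.mem_insert_iff, Set.mem_singleton_iff, forall_eq_or_imp, forall_eq] at houter
  obtain ⟨⟨-, hsaw, -⟩, ⟨-, hsbw, -⟩, ⟨-, htaw, -⟩, ⟨-, htbw, -⟩, hvCs, -, hvCt⟩ := houter
  have Ns := neighborFinset_eq_of_degree_eq_three (hcubic s) hsa hsb hsw hsab hsaw hsbw
  have Nw := neighborFinset_eq_of_degree_eq_three (hcubic w) hsw.symm hwt hvC hst
    (Ne.symm hvCs) (Ne.symm hvCt)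
  have Nt := neighborFinset_eq_of_degree_eq_three (hcubic t) hta htb hwt.symm htab htaw htbw
  have hproper : ∀ v ∉ ({s, w, t} : Finset V), G.ProperAt c v := fun v hv =>
    hc.properAt (by simpa using hv) fun u hvu => ⟨hvu, by
      simp only [Finset.mem_insert, Finset.mem_singleton, not_or] at hv
      simp [hv]⟩
  have hpar := sum_toKlein_dangling_eq_zero hcubic Ns Nw Nt hproper
  constructor
  · intro hAB
    by_contra hA'B'
    obtain ⟨X, hX⟩ := exists_toKlein_eq_add_of_ne hAB
    obtain ⟨Y, hY⟩ := exists_toKlein_eq_add_of_ne hA'B'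
    refine hsnark ⟨_, properOn_edgeSet_update_update hcubic Ns Nw Nt hproper (X := X) (Y := Y)
      (by rw [hX, CharTwo.add_self_eq_zero]) (by rw [hX, hY]; linear_combination hpar)
      (by rw [hY, CharTwo.add_self_eq_zero])⟩
  · intro hA'B'
    rw [hA'B'] at hpar
    have h : toKlein (c s(s, sa)) + toKlein (c s(s, sb)) + toKlein (c s(w, vC)) = 0 := by
      linear_combination hpar - CharTwo.add_self_eq_zero (toKlein (c s(t, tb)))
    exact (toKlein_add_add_eq_zero_iff.1 h).1
end

section
/- Let S be a Loupekine 5-pole formed by removing a P_3 from a snark, and let m, a, c be positive integers with gcd(m, a, c) = 1 and m/gcd(a, m) odd. Then the Z_m lift S_α(m; a, a, c) obtained from the α-connection voltage graph (arrows A' → A and B' → B both labelled a, loop at w labelled c) is a snark. -/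
/-!
Take a proper 3-edge-colouring of the lift and look at the copy `i` of the 5-pole, with
semiedges `A, B` (towards copy `i - a`), `A', B'` (towards copy `i + a`) and `C` (to `w`).
By the parity lemma every colour occurs an odd number of times on these five semiedges.
If `A ≠ B`, `A' ≠ B'` and the colours missing at `s` and at `t` can be chosen distinct, putting
the path `s w t` back 3-edge-colours the snark `G`; so this never happens, and a finite check
shows that exactly one of `A = B`, `A' = B'` holds. Since `A', B'` of copy `i` are `A, B` of
copy `i + a`, the property `A' = B'` alternates along `i, i + a, i + 2a, …`, which is
impossible because `a` has odd order `m / gcd(a, m)` in `ZMod m`.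
-/

open Finset

section Coloring

variable {V : Type*} {G : SimpleGraph V} {c : Sym2 V → Fin 3}

theorem properOn_edgeSet_empty_iff :
    ProperOn G.edgeSet ∅ c ↔ ∀ v, Set.InjOn (fun u => c s(v, u)) (G.neighborSet v) := by
  constructor
  · intro h v u₁ hu₁ u₂ hu₂ heq
    by_contra hne
    exact h _ hu₁ _ hu₂ (fun h => hne (Sym2.congr_right.mp h))
      ⟨v, Set.notMem_empty v, Sym2.mem_mk_left _ _, Sym2.mem_mk_left _ _⟩ heq
  · rintro h e₁ he₁ e₂ he₂ hne ⟨v, -, hv₁, hv₂⟩ heq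
    obtain ⟨u₁, rfl⟩ := Sym2.mem_iff_exists.mp hv₁
    obtain ⟨u₂, rfl⟩ := Sym2.mem_iff_exists.mp hv₂
    exact hne (congrArg _ (h v he₁ he₂ heq))

theorem ProperOn.eq_of_adj_of_color_eq (hc : ProperOn G.edgeSet ∅ c) {v u₁ u₂ : V}
    (h₁ : G.Adj v u₁) (h₂ : G.Adj v u₂) (h : c s(v, u₁) = c s(v, u₂)) : u₁ = u₂ :=
  properOn_edgeSet_empty_iff.mp hc v h₁ h₂ h

theorem ProperOn.exists_adj_color_eq (hc : ProperOn G.edgeSet ∅ c) {v p q r : V}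
    (hpq : p ≠ q) (hpr : p ≠ r) (hqr : q ≠ r) (hp : G.Adj v p) (hq : G.Adj v q) (hr : G.Adj v r)
    (k : Fin 3) : ∃ u, G.Adj v u ∧ c s(v, u) = k := by
  have hne {u₁ u₂} (h₁ : G.Adj v u₁) (h₂ : G.Adj v u₂) (h : u₁ ≠ u₂) : c s(v, u₁) ≠ c s(v, u₂) :=
    fun heq => h (hc.eq_of_adj_of_color_eq h₁ h₂ heq)
  have hcover : ∀ a b d : Fin 3, a ≠ b → a ≠ d → b ≠ d → k = a ∨ k = b ∨ k = d := by
    revert k; decide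
  rcases hcover _ _ _ (hne hp hq hpq) (hne hp hr hpr) (hne hq hr hqr) with h | h | h
  exacts [⟨p, hp, h.symm⟩, ⟨q, hq, h.symm⟩, ⟨r, hr, h.symm⟩]

/-- The parity lemma: the edges `x r — y r` are the edges of `G` leaving `S`. -/
theorem ProperOn.card_cut_color_modEq {ι : Type*} [Fintype ι]
    (hc : ProperOn G.edgeSet ∅ c) {S : Finset V}
    (hS : ∀ v ∈ S, ∀ k, ∃ u, G.Adj v u ∧ c s(v, u) = k)
    {x y : ι → V} (hx : ∀ r, x r ∈ S) (hy : ∀ r, y r ∉ S) (hxy : ∀ r, G.Adj (x r) (y r))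
    (hinj : Function.Injective fun r => (x r, y r))
    (hcut : ∀ v ∈ S, ∀ u ∉ S, G.Adj v u → ∃ r, x r = v ∧ y r = u) (k : Fin 3) :
    #{r | c s(x r, y r) = k} ≡ #S [MOD 2] := by
  classical
  choose! n hn using fun v hv => hS v hv k
  have hnn : ∀ v ∈ S, n v ∈ S → n (n v) = v := fun v hv hnv =>
    hc.eq_of_adj_of_color_eq (hn _ hnv).1 (hn v hv).1.symm
      (by rw [(hn _ hnv).2, Sym2.eq_swap, (hn v hv).2])
  -- `n` pairs up the vertices of `S` joined inside `S` by an edge of colour `k`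
  have hinside : (#{v ∈ S | n v ∈ S} : ZMod 2) = 0 := by
    rw [card_eq_sum_ones, Nat.cast_sum]
    refine sum_involution (fun v _ => n v) (fun _ _ => by decide) ?_ ?_ ?_
    · intro v hv _
      exact ((hn v (mem_filter.mp hv).1).1.ne).symm
    · intro v hv
      rw [mem_filter] at hv ⊢
      rw [hnn v hv.1 hv.2]
      exact ⟨hv.2, hv.1⟩
    · intro v hv
      exact hnn v (mem_filter.mp hv).1 (mem_filter.mp hv).2
  have hcut_card : #{r | c s(x r, y r) = k} = #{v ∈ S | n v ∉ S} := by
    have hyn : ∀ r, c s(x r, y r) = k → n (x r) = y r := fun r hr =>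
      hc.eq_of_adj_of_color_eq (hn _ (hx r)).1 (hxy r) ((hn _ (hx r)).2.trans hr.symm)
    apply card_nbij x
    · intro r hr
      simp only [coe_filter, mem_univ, true_and, Set.mem_ofPred_eq] at hr ⊢
      exact ⟨hx r, hyn r hr ▸ hy r⟩
    · intro r hr r' hr' h
      simp only [coe_filter, mem_univ, true_and, Set.mem_ofPred_eq] at hr hr'
      exact hinj (Prod.ext h (show y r = y r' by rw [← hyn r hr, ← hyn r' hr', h]))
    · intro v hv
      simp only [coe_filter, Set.mem_ofPred_eq] at hv
      obtain ⟨r, rfl, hr⟩ := hcut v hv.1 (n v) hv.2 (hn v hv.1).1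
      exact ⟨r, by simpa [hr] using (hn _ hv.1).2, rfl⟩
  rw [← ZMod.natCast_eq_natCast_iff, hcut_card,
    ← card_filter_add_card_filter_not (fun v => n v ∈ S) (s := S), Nat.cast_add, hinside, zero_add]

end Coloring

theorem Set.injOn_triple {α β : Type*} {f : α → β} {a b c : α} (hab : f a ≠ f b)
    (hac : f a ≠ f c) (hbc : f b ≠ f c) : Set.InjOn f {a, b, c} := by
  rintro _ (rfl | rfl | rfl) _ (rfl | rfl | rfl) h <;> first | rfl | simp_all

theorem SimpleGraph.neighborSet_eq_of_ncard_eq_three {V : Type*} {G : SimpleGraph V}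
    {v x y z : V} (h3 : (G.neighborSet v).ncard = 3) (hx : G.Adj v x) (hy : G.Adj v y)
    (hz : G.Adj v z) (hxy : x ≠ y) (hxz : x ≠ z) (hyz : y ≠ z) : G.neighborSet v = {x, y, z} :=
  (Set.eq_of_subset_of_ncard_le (by simp [Set.insert_subset_iff, hx, hy, hz])
    (by rw [h3, Set.ncard_eq_three.mpr ⟨x, y, z, hxy, hxz, hyz, rfl⟩])
    (Set.finite_of_ncard_ne_zero (by rw [h3]; decide))).symm

theorem even_addOrderOf_of_forall_add_iff_not {Z : Type*} [AddMonoid Z] {α : Z} {P : Z → Prop}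
    (hP : ∀ i, P (i + α) ↔ ¬ P i) : Even (addOrderOf α) := by
  have key : ∀ (n : ℕ) i, P (i + n • α) ↔ (P i ↔ Even n) := by
    intro n
    induction n with
    | zero => simp
    | succ n ih => intro i; rw [succ_nsmul, ← add_assoc, hP, ih, Nat.even_add_one]; tauto
  have := key (addOrderOf α) 0
  rw [addOrderOf_nsmul_eq_zero, add_zero] at this
  tauto

theorem add_self_ne_zero_of_odd_addOrderOf {Z : Type*} [AddMonoid Z] {α : Z} (hα : α ≠ 0)
    (hodd : Odd (addOrderOf α)) : α + α ≠ 0 := by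
  intro h
  have hdvd : addOrderOf α ∣ 2 := addOrderOf_dvd_of_nsmul_eq_zero (by rwa [two_nsmul])
  rcases (Nat.dvd_prime Nat.prime_two).mp hdvd with h1 | h2
  · exact hα (AddMonoid.addOrderOf_eq_one_iff.mp h1)
  · exact Nat.not_even_iff_odd.mpr hodd (h2 ▸ even_two)

set_option synthInstance.maxSize 1000 in
/-- The colours of the semiedges `A, B, A', B', C` of a 3-edge-coloured Loupekine 5-pole
obtained from a snark: each colour occurs an odd number of times, and `A ≠ B`, `A' ≠ B'` do not
leave room for distinct colours `x` on `sw` and `y` on `tw`. -/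
theorem five_pole_eq_iff_ne (A B A' B' C : Fin 3)
    (hpar : ∀ k k', #{r | ![A, B, A', B', C] r = k} ≡ #{r | ![A, B, A', B', C] r = k'} [MOD 2])
    (hrec : ¬ (A ≠ B ∧ A' ≠ B' ∧
      ∃ x y, x ≠ y ∧ x ≠ A ∧ x ≠ B ∧ x ≠ C ∧ y ≠ A' ∧ y ≠ B' ∧ y ≠ C)) :
    A = B ↔ A' ≠ B' := by
  revert A B A' B' C; decide

/-- A cubic graph `G` with a path `s — w — t`, together with the lift `H` on `U × Z` of the
α-connection voltage graph of the 5-pole `G - {s, w, t}`. The copy `i` of the 5-pole is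
`{(u, i) | u ∉ {s, w, t}}`, the vertex `(w, i)` is the vertex `w` of the voltage graph carrying
the loop of voltage `γ`, and the vertices `(s, i)`, `(t, i)` are isolated in `H`. -/
structure LoupekineLift (U Z : Type*) [AddGroup Z] where
  G : SimpleGraph U
  H : SimpleGraph (U × Z)
  (s w t sa sb ta tb vC : U)
  (α γ : Z)
  ncard_neighborSet : ∀ v, (G.neighborSet v).ncard = 3
  adj_s_w : G.Adj s w
  adj_w_t : G.Adj w t
  s_ne_t : s ≠ t
  adj_s_sa : G.Adj s sa
  adj_s_sb : G.Adj s sb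
  sa_ne_sb : sa ≠ sb
  adj_t_ta : G.Adj t ta
  adj_t_tb : G.Adj t tb
  ta_ne_tb : ta ≠ tb
  adj_w_vC : G.Adj w vC
  ne_of_mem_ends : ∀ u ∈ ({sa, sb, ta, tb, vC} : Set U), u ≠ s ∧ u ≠ w ∧ u ≠ t
  α_ne_zero : α ≠ 0
  α_add_α_ne_zero : α + α ≠ 0
  adj_same : ∀ (i : Z) (u u' : U),
    H.Adj (u, i) (u', i) ↔ (G.Adj u u' ∧ u ≠ s ∧ u ≠ t ∧ u' ≠ s ∧ u' ≠ t)
  adj_of_ne : ∀ (i j : Z), i ≠ j → ∀ u u' : U,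
    H.Adj (u, i) (u', j) ↔
      ((j = i + α ∧ ((u = ta ∧ u' = sa) ∨ (u = tb ∧ u' = sb))) ∨
       (i = j + α ∧ ((u' = ta ∧ u = sa) ∨ (u' = tb ∧ u = sb))) ∨
       (u = w ∧ u' = w ∧ (j = i + γ ∨ i = j + γ)))

namespace LoupekineLift

variable {U Z : Type*} [AddGroup Z] (L : LoupekineLift U Z)

def IsPoleVertex (u : U) : Prop := u ≠ L.s ∧ u ≠ L.w ∧ u ≠ L.t

/-- The semiedges `A, B, A', B', C` of the copy `i` of the 5-pole are the edges of `H` from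
`(L.poleEnd r, i)` to `L.farEnd i r`. -/
def poleEnd : Fin 5 → U := ![L.sa, L.sb, L.ta, L.tb, L.vC]

def farEnd (i : Z) : Fin 5 → U × Z :=
  ![(L.ta, i - L.α), (L.tb, i - L.α), (L.sa, i + L.α), (L.sb, i + L.α), (L.w, i)]

theorem isPoleVertex_poleEnd (r : Fin 5) : L.IsPoleVertex (L.poleEnd r) :=
  L.ne_of_mem_ends _ (by fin_cases r <;> simp [poleEnd])

theorem neighborSet_s : L.G.neighborSet L.s = {L.sa, L.sb, L.w} :=
  SimpleGraph.neighborSet_eq_of_ncard_eq_three (L.ncard_neighborSet _) L.adj_s_sa L.adj_s_sb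
    L.adj_s_w L.sa_ne_sb (L.isPoleVertex_poleEnd 0).2.1 (L.isPoleVertex_poleEnd 1).2.1

theorem neighborSet_t : L.G.neighborSet L.t = {L.ta, L.tb, L.w} :=
  SimpleGraph.neighborSet_eq_of_ncard_eq_three (L.ncard_neighborSet _) L.adj_t_ta L.adj_t_tb
    L.adj_w_t.symm L.ta_ne_tb (L.isPoleVertex_poleEnd 2).2.1 (L.isPoleVertex_poleEnd 3).2.1

theorem neighborSet_w : L.G.neighborSet L.w = {L.s, L.t, L.vC} :=
  SimpleGraph.neighborSet_eq_of_ncard_eq_three (L.ncard_neighborSet _) L.adj_s_w.symm L.adj_w_t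
    L.adj_w_vC L.s_ne_t (L.isPoleVertex_poleEnd 4).1.symm (L.isPoleVertex_poleEnd 4).2.2.symm

theorem sub_ne_add (i : Z) : i - L.α ≠ i + L.α := by
  intro h
  apply L.α_add_α_ne_zero
  rw [sub_eq_add_neg] at h
  rw [← neg_add_cancel L.α, add_left_cancel h]

theorem sub_ne_self (i : Z) : i - L.α ≠ i := by
  simpa using L.α_ne_zero

theorem add_ne_self (i : Z) : i + L.α ≠ i := by
  simpa using L.α_ne_zero

theorem adj_ta_sa (j : Z) : L.H.Adj (L.ta, j) (L.sa, j + L.α) :=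
  (L.adj_of_ne j _ (L.add_ne_self j).symm _ _).mpr (Or.inl ⟨rfl, Or.inl ⟨rfl, rfl⟩⟩)

theorem adj_tb_sb (j : Z) : L.H.Adj (L.tb, j) (L.sb, j + L.α) :=
  (L.adj_of_ne j _ (L.add_ne_self j).symm _ _).mpr (Or.inl ⟨rfl, Or.inr ⟨rfl, rfl⟩⟩)

theorem adj_sa_ta (j : Z) : L.H.Adj (L.sa, j) (L.ta, j - L.α) := by
  simpa using (L.adj_ta_sa (j - L.α)).symm

theorem adj_sb_tb (j : Z) : L.H.Adj (L.sb, j) (L.tb, j - L.α) := by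
  simpa using (L.adj_tb_sb (j - L.α)).symm

theorem adj_poleEnd_farEnd (i : Z) (r : Fin 5) : L.H.Adj (L.poleEnd r, i) (L.farEnd i r) := by
  fin_cases r
  · exact L.adj_sa_ta i
  · exact L.adj_sb_tb i
  · exact L.adj_ta_sa i
  · exact L.adj_tb_sb i
  · exact (L.adj_same i _ _).mpr ⟨L.adj_w_vC.symm, (L.isPoleVertex_poleEnd 4).1,
      (L.isPoleVertex_poleEnd 4).2.2, L.adj_s_w.ne.symm, L.adj_w_t.ne⟩

theorem farEnd_injective (i : Z) : Function.Injective (L.farEnd i) := by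
  intro r r' h
  fin_cases r <;> fin_cases r' <;> simp_all [farEnd, Prod.ext_iff, L.sa_ne_sb, L.ta_ne_tb,
    L.sa_ne_sb.symm, L.ta_ne_tb.symm, L.sub_ne_add, L.sub_ne_self, L.add_ne_self,
    (L.sub_ne_add i).symm, (L.sub_ne_self i).symm, (L.add_ne_self i).symm]

variable {L} (col : Sym2 (U × Z) → Fin 3)

def boundaryColor (i : Z) (r : Fin 5) : Fin 3 := col s((L.poleEnd r, i), L.farEnd i r)

variable {col}

theorem boundaryColor_add_α (i : Z) :
    L.boundaryColor col (i + L.α) 0 = L.boundaryColor col i 2 ∧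
      L.boundaryColor col (i + L.α) 1 = L.boundaryColor col i 3 := by
  simp [boundaryColor, poleEnd, farEnd, Sym2.eq_swap]

variable (L) [DecidableEq U]

instance : DecidablePred L.IsPoleVertex := fun _ => inferInstanceAs (Decidable (_ ∧ _ ∧ _))

/-- For a vertex `v` of the 5-pole, the neighbour of `(v, i)` in `H` lying over the neighbour `u`
of `v` in `G`: the edges to the deleted vertices `s` and `t` become the α-connections. -/
def liftNbr (i : Z) (v u : U) : U × Z :=
  if u = L.s then (if v = L.sa then L.ta else L.tb, i - L.α)
  else if u = L.t then (if v = L.ta then L.sa else L.sb, i + L.α)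
  else (u, i)

theorem liftNbr_injective (i : Z) (v : U) : Function.Injective (L.liftNbr i v) := by
  intro u₁ u₂ h
  unfold liftNbr at h
  split_ifs at h <;> simp_all [Prod.ext_iff, L.sub_ne_add, L.sub_ne_self, L.add_ne_self,
    (L.sub_ne_add i).symm, (L.sub_ne_self i).symm, (L.add_ne_self i).symm]

theorem adj_liftNbr {v u : U} (hv : L.IsPoleVertex v) (hu : L.G.Adj v u) (i : Z) :
    L.H.Adj (v, i) (L.liftNbr i v u) := by
  obtain ⟨hvs, hvw, hvt⟩ := hv
  unfold liftNbr
  split_ifs with hs hsa ht hta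
  · exact hsa ▸ L.adj_sa_ta i
  · have : v ∈ L.G.neighborSet L.s := hs ▸ hu.symm
    rw [L.neighborSet_s] at this
    obtain rfl : v = L.sb := by simp_all
    exact L.adj_sb_tb i
  · exact hta ▸ L.adj_ta_sa i
  · have : v ∈ L.G.neighborSet L.t := ht ▸ hu.symm
    rw [L.neighborSet_t] at this
    obtain rfl : v = L.tb := by simp_all
    exact L.adj_tb_sb i
  · exact (L.adj_same i v u).mpr ⟨hu, hvs, hvt, hs, ht⟩

variable {L}

theorem exists_adj_color_eq (hcol : ProperOn L.H.edgeSet ∅ col) {v : U} (hv : L.IsPoleVertex v)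
    (i : Z) (k : Fin 3) : ∃ q, L.H.Adj (v, i) q ∧ col s((v, i), q) = k := by
  obtain ⟨x, y, z, hxy, hxz, hyz, hN⟩ := Set.ncard_eq_three.mp (L.ncard_neighborSet v)
  have hadj : ∀ u ∈ ({x, y, z} : Set U), L.H.Adj (v, i) (L.liftNbr i v u) :=
    fun u hu => L.adj_liftNbr hv (show u ∈ L.G.neighborSet v from hN ▸ hu) i
  have hinj := L.liftNbr_injective i v
  exact hcol.exists_adj_color_eq (hinj.ne hxy) (hinj.ne hxz) (hinj.ne hyz) (hadj x (by simp))
    (hadj y (by simp)) (hadj z (by simp)) k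

variable (L col)

def dartColor (i : Z) (v u : U) : Fin 3 := col s((v, i), L.liftNbr i v u)

/-- The colouring of `G` obtained from the copy `i` of the 5-pole by putting the path
`s — w — t` back, with colour `x` on `sw` and `y` on `tw`. -/
def reconnect (i : Z) (x y : Fin 3) (u v : U) : Fin 3 :=
  if u = L.s then (if v = L.w then x else L.dartColor col i v L.s)
  else if v = L.s then (if u = L.w then x else L.dartColor col i u L.s)
  else if u = L.t then (if v = L.w then y else L.dartColor col i v L.t)
  else if v = L.t then (if u = L.w then y else L.dartColor col i u L.t)
  else L.dartColor col i u v

theorem reconnect_comm (i : Z) (x y : Fin 3) (u v : U) :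
    L.reconnect col i x y u v = L.reconnect col i x y v u := by
  unfold reconnect
  split_ifs <;> subst_vars <;> first | rfl | (exfalso; simp_all) | simp only [dartColor, liftNbr,
    if_neg ‹¬u = L.s›, if_neg ‹¬u = L.t›, if_neg ‹¬v = L.s›, if_neg ‹¬v = L.t›, Sym2.eq_swap]

variable {L col}

theorem reconnect_of_isPoleVertex (i : Z) (x y : Fin 3) {v : U} (hv : L.IsPoleVertex v)
    (u : U) : L.reconnect col i x y v u = L.dartColor col i v u := by
  obtain ⟨hvs, hvw, hvt⟩ := hv
  unfold reconnect
  split_ifs <;> simp_all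

theorem exists_properOn_of_reconnect (hcol : ProperOn L.H.edgeSet ∅ col) (i : Z) {x y : Fin 3}
    (hxy : x ≠ y) (h01 : L.boundaryColor col i 0 ≠ L.boundaryColor col i 1)
    (h23 : L.boundaryColor col i 2 ≠ L.boundaryColor col i 3)
    (hx0 : x ≠ L.boundaryColor col i 0) (hx1 : x ≠ L.boundaryColor col i 1)
    (hx4 : x ≠ L.boundaryColor col i 4) (hy2 : y ≠ L.boundaryColor col i 2)
    (hy3 : y ≠ L.boundaryColor col i 3) (hy4 : y ≠ L.boundaryColor col i 4) :
    ∃ c : Sym2 U → Fin 3, ProperOn L.G.edgeSet ∅ c := by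
  refine ⟨Sym2.lift ⟨L.reconnect col i x y, L.reconnect_comm col i x y⟩,
    properOn_edgeSet_empty_iff.mpr fun v => ?_⟩
  simp only [Sym2.lift_mk]
  have hsa : L.IsPoleVertex L.sa := L.isPoleVertex_poleEnd 0
  have hsb : L.IsPoleVertex L.sb := L.isPoleVertex_poleEnd 1
  have hta : L.IsPoleVertex L.ta := L.isPoleVertex_poleEnd 2
  have htb : L.IsPoleVertex L.tb := L.isPoleVertex_poleEnd 3
  have hvC : L.IsPoleVertex L.vC := L.isPoleVertex_poleEnd 4
  by_cases hvs : v = L.s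
  · subst hvs
    rw [L.neighborSet_s]
    apply Set.injOn_triple <;>
      simp [reconnect, dartColor, liftNbr, hsa.2.1, hsb.2.1, L.sa_ne_sb.symm]
    exacts [h01, hx0.symm, hx1.symm]
  by_cases hvt : v = L.t
  · subst hvt
    rw [L.neighborSet_t]
    apply Set.injOn_triple <;> simp [reconnect, dartColor, liftNbr, hta.1, hta.2.1, htb.1,
      htb.2.1, L.ta_ne_tb.symm, L.s_ne_t.symm, L.adj_s_w.ne.symm]
    exacts [h23, hy2.symm, hy3.symm]
  by_cases hvw : v = L.w
  · subst hvw
    rw [L.neighborSet_w]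
    apply Set.injOn_triple <;>
      simp [reconnect, dartColor, liftNbr, L.s_ne_t.symm, hvs, hvt, hvC.1, hvC.2.2]
    exacts [hxy, Sym2.eq_swap ▸ hx4, Sym2.eq_swap ▸ hy4]
  have hv : L.IsPoleVertex v := ⟨hvs, hvw, hvt⟩
  simp only [reconnect_of_isPoleVertex i x y hv, dartColor]
  exact (properOn_edgeSet_empty_iff.mp hcol (v, i)).comp (L.liftNbr_injective i v).injOn
    (fun u hu => L.adj_liftNbr hv hu i)

variable (L) [Fintype U]

def cluster (i : Z) : Finset (U × Z) := univ.filter L.IsPoleVertex ×ˢ {i}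

variable {L}

theorem mem_cluster {i : Z} {p : U × Z} : p ∈ L.cluster i ↔ L.IsPoleVertex p.1 ∧ p.2 = i := by
  simp only [cluster, mem_product, mem_filter, mem_univ, true_and, mem_singleton]

theorem exists_poleEnd_farEnd_of_adj {i : Z} {p q : U × Z} (hp : p ∈ L.cluster i)
    (hq : q ∉ L.cluster i) (hpq : L.H.Adj p q) :
    ∃ r, (L.poleEnd r, i) = p ∧ L.farEnd i r = q := by
  obtain ⟨u, j⟩ := p
  obtain ⟨u', j'⟩ := q
  obtain ⟨⟨hus, huw, hut⟩, rfl⟩ := mem_cluster.mp hp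
  by_cases hj : j' = j
  · subst hj
    obtain ⟨hadj, -, -, hu's, hu't⟩ := (L.adj_same _ u u').mp hpq
    have hu'w : u' = L.w := by
      by_contra hu'w
      exact hq (mem_cluster.mpr ⟨⟨hu's, hu'w, hu't⟩, rfl⟩)
    subst hu'w
    have : u ∈ L.G.neighborSet L.w := hadj.symm
    rw [L.neighborSet_w] at this
    obtain rfl : u = L.vC := by simp_all
    exact ⟨4, rfl, rfl⟩
  · rcases (L.adj_of_ne j j' (Ne.symm hj) u u').mp hpq with
      ⟨rfl, ⟨rfl, rfl⟩ | ⟨rfl, rfl⟩⟩ | ⟨hj', ⟨rfl, rfl⟩ | ⟨rfl, rfl⟩⟩ | ⟨rfl, -⟩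
    · exact ⟨2, rfl, rfl⟩
    · exact ⟨3, rfl, rfl⟩
    · exact ⟨0, rfl, by simp [farEnd, hj']⟩
    · exact ⟨1, rfl, by simp [farEnd, hj']⟩
    · exact absurd rfl huw

theorem card_boundaryColor_modEq (hcol : ProperOn L.H.edgeSet ∅ col) (i : Z) (k k' : Fin 3) :
    #{r | L.boundaryColor col i r = k} ≡ #{r | L.boundaryColor col i r = k'} [MOD 2] := by
  have key := hcol.card_cut_color_modEq (S := L.cluster i)
    (fun p hp => exists_adj_color_eq hcol (mem_cluster.mp hp).1 p.2)
    (fun r => mem_cluster.mpr ⟨L.isPoleVertex_poleEnd r, rfl⟩)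
    (fun r => by
      fin_cases r <;> simp [mem_cluster, farEnd, IsPoleVertex, L.sub_ne_self, L.add_ne_self])
    (L.adj_poleEnd_farEnd i) (fun _ _ h => L.farEnd_injective i (congrArg Prod.snd h))
    (fun _ hp _ hq hpq => exists_poleEnd_farEnd_of_adj hp hq hpq)
  exact (key k).trans (key k').symm

theorem boundaryColor_eq_iff_ne (hsnark : ¬ ∃ c : Sym2 U → Fin 3, ProperOn L.G.edgeSet ∅ c)
    (hcol : ProperOn L.H.edgeSet ∅ col) (i : Z) :
    L.boundaryColor col i 0 = L.boundaryColor col i 1 ↔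
      L.boundaryColor col i 2 ≠ L.boundaryColor col i 3 := by
  have hvec : ![L.boundaryColor col i 0, L.boundaryColor col i 1, L.boundaryColor col i 2,
      L.boundaryColor col i 3, L.boundaryColor col i 4] = L.boundaryColor col i := by
    ext r; fin_cases r <;> rfl
  refine five_pole_eq_iff_ne _ _ _ _ _ (hvec ▸ card_boundaryColor_modEq hcol i) ?_
  rintro ⟨h01, h23, x, y, hxy, hx0, hx1, hx4, hy2, hy3, hy4⟩
  exact hsnark (exists_properOn_of_reconnect hcol i hxy h01 h23 hx0 hx1 hx4 hy2 hy3 hy4)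

theorem not_exists_properOn (hsnark : ¬ ∃ c : Sym2 U → Fin 3, ProperOn L.G.edgeSet ∅ c)
    (hodd : Odd (addOrderOf L.α)) :
    ¬ ∃ col : Sym2 (U × Z) → Fin 3, ProperOn L.H.edgeSet ∅ col := by
  rintro ⟨col, hcol⟩
  refine Nat.not_even_iff_odd.mpr hodd (even_addOrderOf_of_forall_add_iff_not
    (P := fun i => L.boundaryColor col i 2 = L.boundaryColor col i 3) fun i => ?_)
  have h := boundaryColor_eq_iff_ne hsnark hcol (i + L.α)
  rw [(boundaryColor_add_α i).1, (boundaryColor_add_α i).2] at h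
  tauto

end LoupekineLift

theorem cyclic_loupekine_snark_general {U : Type*} [Fintype U] [DecidableEq U]
    (G : SimpleGraph U) [DecidableRel G.Adj]
    (hcubic : ∀ v : U, G.degree v = 3)
    (hsnark : ¬ ∃ c : Sym2 U → Fin 3, ProperOn G.edgeSet (∅ : Set U) c)
    (s w t sa sb ta tb vC : U)
    (hsw : G.Adj s w) (hwt : G.Adj w t) (hst : s ≠ t)
    (hsa : G.Adj s sa) (hsb : G.Adj s sb) (hsab : sa ≠ sb)
    (hta : G.Adj t ta) (htb : G.Adj t tb) (htab : ta ≠ tb)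
    (hvC : G.Adj w vC)
    (houter : ∀ u ∈ ({sa, sb, ta, tb, vC} : Set U), u ≠ s ∧ u ≠ w ∧ u ≠ t)
    (m a c : ℕ)
    (ha1 : 1 ≤ a) (ha2 : a < m)
    (hodd : Odd (m / Nat.gcd a m))
    (H : SimpleGraph (U × ZMod m))
    -- in each cluster: the 5-pole together with the spoke edge (w,i)-(vC,i)
    (hint : ∀ (i : ZMod m) (u u' : U),
      H.Adj (u, i) (u', i) ↔ (G.Adj u u' ∧ u ≠ s ∧ u ≠ t ∧ u' ≠ s ∧ u' ≠ t))
    -- between clusters: the α-connecting edges of skip a, and the loop edges of skip c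
    (hcross : ∀ (i j : ZMod m), i ≠ j → ∀ u u' : U,
      H.Adj (u, i) (u', j) ↔
        ((j = i + (a : ZMod m) ∧ ((u = ta ∧ u' = sa) ∨ (u = tb ∧ u' = sb))) ∨
         (i = j + (a : ZMod m) ∧ ((u' = ta ∧ u = sa) ∨ (u' = tb ∧ u = sb))) ∨
         (u = w ∧ u' = w ∧ (j = i + (c : ZMod m) ∨ i = j + (c : ZMod m))))) :
    ¬ ∃ col : Sym2 (U × ZMod m) → Fin 3,
        ProperOn H.edgeSet (∅ : Set (U × ZMod m)) col := by
  have hα : (a : ZMod m) ≠ 0 := by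
    rw [Ne, ZMod.natCast_eq_zero_iff]
    exact Nat.not_dvd_of_pos_of_lt ha1 ha2
  have horder : Odd (addOrderOf (a : ZMod m)) := by
    rwa [ZMod.addOrderOf_coe a (by omega), Nat.gcd_comm]
  have hncard : ∀ v, (G.neighborSet v).ncard = 3 := fun v => by
    rw [Set.ncard_eq_toFinset_card', ← G.neighborFinset_def, G.card_neighborFinset_eq_degree,
      hcubic]
  exact LoupekineLift.not_exists_properOn (L := ⟨G, H, s, w, t, sa, sb, ta, tb, vC, a, c, hncard,
    hsw, hwt, hst, hsa, hsb, hsab, hta, htb, htab, hvC, houter, hα,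
    add_self_ne_zero_of_odd_addOrderOf hα horder, hint, hcross⟩) hsnark horder

/-- **Cyclic Loupekine snarks.** Let `S` be the Loupekine 5-pole obtained from a
snark `G` by removing the path `s — w — t` (dangling edges `A = s·sa`, `B = s·sb`
at `s`, `A' = t·ta`, `B' = t·tb` at `t`, `C = w·vC` at `w`).  If
`gcd(m, a, c) = 1` and `m / gcd(a, m)` is odd, then the `ZMod m` lift
`S_α(m; a, a, c)` of the α-connection voltage graph (arrows `A' → A` and
`B' → B` labelled `a`, loop at the reused center `w` labelled `c`) is a snark,
i.e. it has no proper 3-edge-coloring. -/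
theorem cyclic_loupekine_snark {U : Type*} [Fintype U] [DecidableEq U]
    (G : SimpleGraph U) [DecidableRel G.Adj]
    (hcubic : ∀ v : U, G.degree v = 3)
    (hsnark : ¬ ∃ c : Sym2 U → Fin 3, ProperOn G.edgeSet (∅ : Set U) c)
    (s w t sa sb ta tb vC : U)
    (hsw : G.Adj s w) (hwt : G.Adj w t) (hst : s ≠ t)
    (hsa : G.Adj s sa) (hsb : G.Adj s sb) (hsab : sa ≠ sb)
    (hta : G.Adj t ta) (htb : G.Adj t tb) (htab : ta ≠ tb)
    (hvC : G.Adj w vC)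
    (houter : ∀ u ∈ ({sa, sb, ta, tb, vC} : Set U), u ≠ s ∧ u ≠ w ∧ u ≠ t)
    (m a c : ℕ) [NeZero m]
    (ha1 : 1 ≤ a) (ha2 : a < m) (hc1 : 1 ≤ c) (hc2 : 2 * c < m)
    (hgcd : Nat.gcd m (Nat.gcd a c) = 1)
    (hodd : Odd (m / Nat.gcd a m))
    (H : SimpleGraph (U × ZMod m))
    -- in each cluster: the 5-pole together with the spoke edge (w,i)-(vC,i)
    (hint : ∀ (i : ZMod m) (u u' : U),
      H.Adj (u, i) (u', i) ↔ (G.Adj u u' ∧ u ≠ s ∧ u ≠ t ∧ u' ≠ s ∧ u' ≠ t))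
    -- between clusters: the α-connecting edges of skip a, and the loop edges of skip c
    (hcross : ∀ (i j : ZMod m), i ≠ j → ∀ u u' : U,
      H.Adj (u, i) (u', j) ↔
        ((j = i + (a : ZMod m) ∧ ((u = ta ∧ u' = sa) ∨ (u = tb ∧ u' = sb))) ∨
         (i = j + (a : ZMod m) ∧ ((u' = ta ∧ u = sa) ∨ (u' = tb ∧ u = sb))) ∨
         (u = w ∧ u' = w ∧ (j = i + (c : ZMod m) ∨ i = j + (c : ZMod m))))) :
    ¬ ∃ col : Sym2 (U × ZMod m) → Fin 3,
        ProperOn H.edgeSet (∅ : Set (U × ZMod m)) col :=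
  cyclic_loupekine_snark_general G hcubic hsnark s w t sa sb ta tb vC hsw hwt hst hsa hsb hsab hta
    htb htab hvC houter m a c ha1 ha2 hodd H hint hcross
end

section
/- Let m be even and c a positive integer with m/gcd(m,c) even. Then the graph G_α(m; 1, 1, c) is properly 3-edge-colorable, where G is the specific 5-pole of Theorem 5.1 (equivalently, any 5-pole admitting color patterns in which the input pair can be monochromatic). -/
/-!
Color the `i`-th copy of the 5-pole with the `TwoLeft` pattern `[(0,0),(1,2)]` for `i` even and
with the `TwoRight` pattern `[(1,2),(0,0)]` for `i` odd (well defined since `m` is even). Then each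
connecting edge `(ta, i) — (sa, i + 1)` or `(tb, i) — (sb, i + 1)` gets the same color from the
clusters at both of its ends, and every spoke has color `0`. The loop edges `(w, i) — (w, i + c)`
form `gcd(m, c)` cycles of the even length `m / gcd(m, c)`, which we color alternately `1` and `2`.
-/

theorem ZMod.natCast_ne_zero_of_lt {m k : ℕ} (hk : k ≠ 0) (hkm : k < m) : (k : ZMod m) ≠ 0 := by
  rw [Ne, ZMod.natCast_eq_zero_iff]
  exact fun h => hk (Nat.eq_zero_of_dvd_of_lt h hkm)

/-- With `g = gcd(m, c)`, adding `c` changes `i.val / g` by the odd number `c / g` modulo the even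
number `m / g`, so the parity of `i.val / g` alternates along the cycles of `i ↦ i + c`. -/
theorem ZMod.exists_map_add_natCast_eq_not {m c : ℕ} [NeZero m] (hmc : Even (m / m.gcd c)) :
    ∃ f : ZMod m → Bool, ∀ i, f (i + c) = !f i := by
  set g := m.gcd c
  have hc : Odd (c / g) := Nat.Coprime.odd_of_left <|
    (Nat.coprime_div_gcd_div_gcd (Nat.gcd_pos_of_pos_left c (NeZero.pos m))).coprime_dvd_left
      (even_iff_two_dvd.mp hmc)
  refine ⟨fun i => decide (Even (i.val / g)), fun i => ?_⟩
  have hval : (i + c).val / g = (i.val / g + c / g) % (m / g) := by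
    rw [ZMod.val_add, ZMod.val_natCast, Nat.add_mod_mod,
      ← Nat.add_div_of_dvd_left (Nat.gcd_dvd_right m c), ← Nat.mod_mul_right_div_self,
      Nat.mul_div_cancel' (Nat.gcd_dvd_left m c)]
  simp [hval, hmc.mod_even_iff, Nat.even_add, Nat.not_even_iff_odd.mpr hc, -Nat.not_even_iff_odd]

theorem SimpleGraph.eq_or_eq_or_eq_of_adj_of_degree_eq_three {V : Type*} [Fintype V]
    {G : SimpleGraph V} [DecidableRel G.Adj] {v a b c x : V} (hv : G.degree v = 3)
    (ha : G.Adj v a) (hb : G.Adj v b) (hc : G.Adj v c) (hab : a ≠ b) (hac : a ≠ c) (hbc : b ≠ c)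
    (hx : G.Adj v x) : x = a ∨ x = b ∨ x = c := by
  classical
  have hsub : ({a, b, c} : Finset V) ⊆ G.neighborFinset v := by
    simp [Finset.insert_subset_iff, ha, hb, hc]
  have heq := Finset.eq_of_subset_of_card_le hsub (by
    rw [G.card_neighborFinset_eq_degree, hv, Finset.card_eq_three.mpr ⟨a, b, c, hab, hac, hbc, rfl⟩])
  have hx' : x ∈ ({a, b, c} : Finset V) := heq ▸ (G.mem_neighborFinset v x).mpr hx
  simpa using hx'

theorem exists_properOn_of_adj_comm {V : Type*} {H : SimpleGraph V} {X : Set V}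
    (κ : V → V → Fin 3) (hcomm : ∀ p q, H.Adj p q → κ p q = κ q p)
    (hne : ∀ v ∉ X, ∀ a b, H.Adj v a → H.Adj v b → a ≠ b → κ v a ≠ κ v b) :
    ∃ col : Sym2 V → Fin 3, ProperOn H.edgeSet X col := by
  refine ⟨Sym2.lift ⟨fun p q => max (κ p q) (κ q p), fun p q => max_comm _ _⟩, ?_⟩
  rintro e₁ he₁ e₂ he₂ hne₁₂ ⟨v, hvX, hv₁, hv₂⟩
  obtain ⟨a, rfl⟩ : ∃ a, s(v, a) = e₁ := ⟨_, Sym2.other_spec hv₁⟩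
  obtain ⟨b, rfl⟩ : ∃ b, s(v, b) = e₂ := ⟨_, Sym2.other_spec hv₂⟩
  rw [SimpleGraph.mem_edgeSet] at he₁ he₂
  simp only [Sym2.lift_mk, ← hcomm v a he₁, ← hcomm v b he₂, max_self]
  exact hne v hvX a b he₁ he₂ (fun h => hne₁₂ (h ▸ rfl))

section AlphaLift

variable {U : Type*} {m : ℕ}

/-- The adjacency of `G_α(m; 1, 1, c)` on `U × ZMod m`: the copies of the 5-pole, the connecting
edges `ta → sa`, `tb → sb` of voltage `1`, and the loop at `w` of voltage `c`. -/
def AlphaLiftAdj (G : SimpleGraph U) (s w t sa sb ta tb : U) (c : ℕ) (p q : U × ZMod m) :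
    Prop :=
  (q.2 = p.2 ∧ G.Adj p.1 q.1 ∧ p.1 ≠ s ∧ p.1 ≠ t ∧ q.1 ≠ s ∧ q.1 ≠ t) ∨
  (q.2 = p.2 + 1 ∧ ((p.1 = ta ∧ q.1 = sa) ∨ (p.1 = tb ∧ q.1 = sb))) ∨
  (p.2 = q.2 + 1 ∧ ((q.1 = ta ∧ p.1 = sa) ∨ (q.1 = tb ∧ p.1 = sb))) ∨
  (p.1 = w ∧ q.1 = w ∧ (q.2 = p.2 + c ∨ p.2 = q.2 + c))

theorem alphaLiftAdj_of_adj {G : SimpleGraph U} {s w t sa sb ta tb : U} {c : ℕ}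
    {H : SimpleGraph (U × ZMod m)}
    (hint : ∀ (i : ZMod m) (u u' : U),
      H.Adj (u, i) (u', i) ↔ (G.Adj u u' ∧ u ≠ s ∧ u ≠ t ∧ u' ≠ s ∧ u' ≠ t))
    (hcross : ∀ (i j : ZMod m), i ≠ j → ∀ u u' : U,
      H.Adj (u, i) (u', j) ↔
        ((j = i + 1 ∧ ((u = ta ∧ u' = sa) ∨ (u = tb ∧ u' = sb))) ∨
         (i = j + 1 ∧ ((u' = ta ∧ u = sa) ∨ (u' = tb ∧ u = sb))) ∨
         (u = w ∧ u' = w ∧ (j = i + (c : ZMod m) ∨ i = j + (c : ZMod m)))))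
    {p q : U × ZMod m} (h : H.Adj p q) : AlphaLiftAdj G s w t sa sb ta tb c p q := by
  obtain ⟨u, i⟩ := p
  obtain ⟨u', j⟩ := q
  by_cases hij : j = i
  · subst hij
    exact Or.inl ⟨rfl, (hint j u u').mp h⟩
  · exact Or.inr ((hcross i j (Ne.symm hij) u u').mp h)

/-- The edge of the 5-pole at `p.1` covered by the edge `pq` of the lift: a connecting edge covers
the dangling edge `s(t, ta)` or `s(t, tb)` at its tail and `s(s, sa)` or `s(s, sb)` at its head. -/
def portEdge (s t : U) (p q : U × ZMod m) : Sym2 U :=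
  if q.2 = p.2 then s(p.1, q.1) else if q.2 = p.2 + 1 then s(t, p.1) else s(s, p.1)

theorem fst_mem_portEdge (s t : U) (p q : U × ZMod m) : p.1 ∈ portEdge s t p q := by
  unfold portEdge
  split_ifs <;> simp

variable {G : SimpleGraph U} {s w t sa sb ta tb : U} {c : ℕ}

theorem AlphaLiftAdj.eq_of_fst_eq {vC : U} (hw : ∀ u, G.Adj w u → u = s ∨ u = t ∨ u = vC)
    (hports : ∀ u ∈ ({sa, sb, ta, tb} : Set U), u ≠ s ∧ u ≠ w ∧ u ≠ t)
    {i : ZMod m} {q : U × ZMod m} (h : AlphaLiftAdj G s w t sa sb ta tb c (w, i) q) :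
    q = (vC, i) ∨ q = (w, i + c) ∨ q = (w, i - c) := by
  obtain ⟨u', j⟩ := q
  simp only [Set.mem_insert_iff, Set.mem_singleton_iff, forall_eq_or_imp, forall_eq] at hports
  simp only [AlphaLiftAdj] at h
  rcases h with ⟨rfl, hG, -, -, hs, ht⟩ | ⟨-, ⟨rfl, -⟩ | ⟨rfl, -⟩⟩ | ⟨-, ⟨-, rfl⟩ | ⟨-, rfl⟩⟩ |
    ⟨-, rfl, rfl | rfl⟩
  · rcases hw u' hG with rfl | rfl | rfl <;> simp_all
  all_goals simp_all

theorem AlphaLiftAdj.fst_ne (hports : ∀ u ∈ ({sa, sb, ta, tb} : Set U), u ≠ s ∧ u ≠ w ∧ u ≠ t)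
    {p q : U × ZMod m} (h : AlphaLiftAdj G s w t sa sb ta tb c p q) (hw : p.1 ≠ w) :
    p.1 ≠ s ∧ p.1 ≠ t := by
  simp only [Set.mem_insert_iff, Set.mem_singleton_iff, forall_eq_or_imp, forall_eq] at hports
  rcases h with ⟨-, -, hs, ht, -⟩ | ⟨-, ⟨h, -⟩ | ⟨h, -⟩⟩ | ⟨-, ⟨-, h⟩ | ⟨-, h⟩⟩ | ⟨h, -⟩ <;>
    simp_all

theorem portEdge_mem (hst : s ≠ t) (hsw : s ≠ w) (hwt : w ≠ t)
    (hsa : G.Adj s sa) (hsb : G.Adj s sb) (hta : G.Adj t ta) (htb : G.Adj t tb)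
    (h2 : (2 : ZMod m) ≠ 0) {p q : U × ZMod m} (h : AlphaLiftAdj G s w t sa sb ta tb c p q)
    (hw : p.1 ≠ w) : portEdge s t p q ∈ G.edgeSet \ {s(s, w), s(w, t)} := by
  obtain ⟨u, i⟩ := p
  obtain ⟨u', j⟩ := q
  have h1 : (1 : ZMod m) ≠ 0 := fun h => h2 (by linear_combination 2 * h)
  simp only [AlphaLiftAdj] at h hw
  rcases h with ⟨rfl, hG, hs, ht, -⟩ | ⟨rfl, ⟨rfl, rfl⟩ | ⟨rfl, rfl⟩⟩ |
    ⟨rfl, ⟨rfl, rfl⟩ | ⟨rfl, rfl⟩⟩ | ⟨rfl, -⟩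
  all_goals simp_all [portEdge, add_assoc, ← two_mul, Ne.symm]

theorem portEdge_injOn (hst : s ≠ t) (hsab : sa ≠ sb) (htab : ta ≠ tb) (h2 : (2 : ZMod m) ≠ 0)
    {p a b : U × ZMod m} (ha : AlphaLiftAdj G s w t sa sb ta tb c p a)
    (hb : AlphaLiftAdj G s w t sa sb ta tb c p b) (hw : p.1 ≠ w)
    (hab : portEdge s t p a = portEdge s t p b) : a = b := by
  obtain ⟨u, i⟩ := p
  obtain ⟨u₁, j₁⟩ := a
  obtain ⟨u₂, j₂⟩ := b
  have h1 : (1 : ZMod m) ≠ 0 := fun h => h2 (by linear_combination 2 * h)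
  have h21 : (2 : ZMod m) ≠ 1 := fun h => h1 (by linear_combination h)
  simp only [AlphaLiftAdj] at ha hb hw
  rcases ha with ⟨rfl, hG₁, hs₁, ht₁, hs₁', ht₁'⟩ | ⟨rfl, ⟨rfl, rfl⟩ | ⟨rfl, rfl⟩⟩ |
    ⟨rfl, ⟨rfl, rfl⟩ | ⟨rfl, rfl⟩⟩ | ⟨rfl, -⟩ <;>
  rcases hb with ⟨hj, hG₂, hs₂, ht₂, hs₂', ht₂'⟩ | ⟨hj, ⟨hu, hu₂⟩ | ⟨hu, hu₂⟩⟩ |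
    ⟨hj, ⟨hu₂, hu⟩ | ⟨hu₂, hu⟩⟩ | ⟨hu, -⟩
  all_goals simp_all [portEdge, add_assoc, ← two_mul, Ne.symm]
  exact hab.elim id fun h => h.2.trans h.1

variable [DecidableEq U]

def liftColor (s w t : U) (c : ℕ) (C : ZMod m → Sym2 U → Fin 3) (lg : ZMod m → Fin 3)
    (p q : U × ZMod m) : Fin 3 :=
  if p.1 = w ∧ q.1 = w then (if q.2 = p.2 + c then lg p.2 else lg q.2)
  else C p.2 (portEdge s t p q)

theorem liftColor_comm {C : ZMod m → Sym2 U → Fin 3} {lg : ZMod m → Fin 3}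
    (hCa : ∀ i, C i s(t, ta) = C (i + 1) s(s, sa)) (hCb : ∀ i, C i s(t, tb) = C (i + 1) s(s, sb))
    (hta : ta ≠ w) (htb : tb ≠ w) (h2 : (2 : ZMod m) ≠ 0) (h2c : 2 * (c : ZMod m) ≠ 0)
    {p q : U × ZMod m} (h : AlphaLiftAdj G s w t sa sb ta tb c p q) :
    liftColor s w t c C lg p q = liftColor s w t c C lg q p := by
  obtain ⟨u, i⟩ := p
  obtain ⟨u', j⟩ := q
  have h1 : (1 : ZMod m) ≠ 0 := fun h => h2 (by linear_combination 2 * h)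
  simp only [AlphaLiftAdj] at h
  rcases h with ⟨rfl, -⟩ | ⟨rfl, ⟨rfl, rfl⟩ | ⟨rfl, rfl⟩⟩ | ⟨rfl, ⟨rfl, rfl⟩ | ⟨rfl, rfl⟩⟩ |
    ⟨rfl, rfl, rfl | rfl⟩
  · simp [liftColor, portEdge, Sym2.eq_swap, and_comm]
  all_goals simp [liftColor, portEdge, add_assoc, ← two_mul, h1, h2, h2c, hta, htb, hCa, hCb]

theorem liftColor_ne_of_fst_eq {vC : U} (hw : ∀ u, G.Adj w u → u = s ∨ u = t ∨ u = vC)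
    (hports : ∀ u ∈ ({sa, sb, ta, tb} : Set U), u ≠ s ∧ u ≠ w ∧ u ≠ t) (hvC : vC ≠ w)
    (h2c : 2 * (c : ZMod m) ≠ 0)
    {C : ZMod m → Sym2 U → Fin 3} {lg : ZMod m → Fin 3} (hspoke : ∀ i, C i s(w, vC) = 0)
    (hlg0 : ∀ i, lg i ≠ 0) (hlg : ∀ i, lg (i + c) ≠ lg i)
    {i : ZMod m} {a b : U × ZMod m} (ha : AlphaLiftAdj G s w t sa sb ta tb c (w, i) a)
    (hb : AlphaLiftAdj G s w t sa sb ta tb c (w, i) b) (hab : a ≠ b) :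
    liftColor s w t c C lg (w, i) a ≠ liftColor s w t c C lg (w, i) b := by
  have hlg' : lg i ≠ lg (i - c) := by simpa using hlg (i - c)
  have hsub : i - c ≠ i + c := fun h => h2c (by linear_combination -h)
  rcases ha.eq_of_fst_eq hw hports with rfl | rfl | rfl <;>
    rcases hb.eq_of_fst_eq hw hports with rfl | rfl | rfl <;>
    simp_all [liftColor, portEdge, Ne.symm]

theorem liftColor_ne_of_fst_ne (hst : s ≠ t) (hsw : s ≠ w) (hwt : w ≠ t)
    (hsa : G.Adj s sa) (hsb : G.Adj s sb) (hsab : sa ≠ sb)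
    (hta : G.Adj t ta) (htb : G.Adj t tb) (htab : ta ≠ tb)
    (hports : ∀ u ∈ ({sa, sb, ta, tb} : Set U), u ≠ s ∧ u ≠ w ∧ u ≠ t) (h2 : (2 : ZMod m) ≠ 0)
    {C : ZMod m → Sym2 U → Fin 3} {lg : ZMod m → Fin 3}
    (hC : ∀ i, ProperOn (G.edgeSet \ {s(s, w), s(w, t)}) {s, w, t} (C i))
    {p a b : U × ZMod m} (ha : AlphaLiftAdj G s w t sa sb ta tb c p a)
    (hb : AlphaLiftAdj G s w t sa sb ta tb c p b) (hab : a ≠ b) (hw : p.1 ≠ w) :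
    liftColor s w t c C lg p a ≠ liftColor s w t c C lg p b := by
  obtain ⟨hs, ht⟩ := ha.fst_ne hports hw
  simp only [liftColor, hw, false_and, if_false]
  exact hC p.2 _ (portEdge_mem hst hsw hwt hsa hsb hta htb h2 ha hw) _
    (portEdge_mem hst hsw hwt hsa hsb hta htb h2 hb hw)
    (fun h => hab (portEdge_injOn hst hsab htab h2 ha hb hw h))
    ⟨p.1, by simp [hs, ht, hw], fst_mem_portEdge s t p a, fst_mem_portEdge s t p b⟩

theorem exists_properOn_of_alphaLiftAdj {vC : U} {H : SimpleGraph (U × ZMod m)}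
    (hH : ∀ p q, H.Adj p q → AlphaLiftAdj G s w t sa sb ta tb c p q)
    (hw : ∀ u, G.Adj w u → u = s ∨ u = t ∨ u = vC)
    (hst : s ≠ t) (hsw : s ≠ w) (hwt : w ≠ t) (hvC : vC ≠ w)
    (hsa : G.Adj s sa) (hsb : G.Adj s sb) (hsab : sa ≠ sb)
    (hta : G.Adj t ta) (htb : G.Adj t tb) (htab : ta ≠ tb)
    (hports : ∀ u ∈ ({sa, sb, ta, tb} : Set U), u ≠ s ∧ u ≠ w ∧ u ≠ t)
    (h2 : (2 : ZMod m) ≠ 0) (h2c : 2 * (c : ZMod m) ≠ 0)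
    (C : ZMod m → Sym2 U → Fin 3)
    (hC : ∀ i, ProperOn (G.edgeSet \ {s(s, w), s(w, t)}) {s, w, t} (C i))
    (hspoke : ∀ i, C i s(w, vC) = 0)
    (hCa : ∀ i, C i s(t, ta) = C (i + 1) s(s, sa)) (hCb : ∀ i, C i s(t, tb) = C (i + 1) s(s, sb))
    (lg : ZMod m → Fin 3) (hlg0 : ∀ i, lg i ≠ 0) (hlg : ∀ i, lg (i + c) ≠ lg i) :
    ∃ col : Sym2 (U × ZMod m) → Fin 3, ProperOn H.edgeSet ∅ col := by
  refine exists_properOn_of_adj_comm (liftColor s w t c C lg)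
    (fun p q h => liftColor_comm hCa hCb (hports ta (by simp)).2.1 (hports tb (by simp)).2.1
      h2 h2c (hH p q h)) ?_
  rintro ⟨u, i⟩ - a b ha hb hab
  rcases eq_or_ne u w with rfl | hu
  · exact liftColor_ne_of_fst_eq hw hports hvC h2c hspoke hlg0 hlg (hH _ _ ha) (hH _ _ hb) hab
  · exact liftColor_ne_of_fst_ne hst hsw hwt hsa hsb hsab hta htb htab hports h2 hC
      (hH _ _ ha) (hH _ _ hb) hab hu

end AlphaLift

/-- If `m` is even and `m / gcd(m,c)` is even, then `G_α(m; 1, 1, c)` is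
properly 3-edge-colorable, where `G` is any 5-pole (obtained from a cubic graph
by deleting the path `s — w — t`) admitting the color patterns in which the
input pair is monochromatic: the `TwoLeft` pattern `[(x,x),(y,z)]` and the
`TwoRight` pattern `[(y,z),(x,x)]`, both with spoke colored `x`. -/
theorem G_alpha_even_colorable {U : Type*} [Fintype U] [DecidableEq U]
    (G : SimpleGraph U) [DecidableRel G.Adj]
    (hcubic : ∀ v : U, G.degree v = 3)
    (s w t sa sb ta tb vC : U)
    (hsw : G.Adj s w) (hwt : G.Adj w t) (hst : s ≠ t)
    (hsa : G.Adj s sa) (hsb : G.Adj s sb) (hsab : sa ≠ sb)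
    (hta : G.Adj t ta) (htb : G.Adj t tb) (htab : ta ≠ tb)
    (hvC : G.Adj w vC)
    (houter : ∀ u ∈ ({sa, sb, ta, tb, vC} : Set U), u ≠ s ∧ u ≠ w ∧ u ≠ t)
    -- the TwoLeft pattern is admissible for the 5-pole
    (hTwoLeft : ∀ x y z : Fin 3, x ≠ y → x ≠ z → y ≠ z →
      ∃ c0 : Sym2 U → Fin 3,
        ProperOn (G.edgeSet \ {s(s, w), s(w, t)}) ({s, w, t} : Set U) c0 ∧
        c0 s(s, sa) = x ∧ c0 s(s, sb) = x ∧ c0 s(w, vC) = x ∧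
        c0 s(t, ta) = y ∧ c0 s(t, tb) = z)
    -- the TwoRight pattern is admissible for the 5-pole
    (hTwoRight : ∀ x y z : Fin 3, x ≠ y → x ≠ z → y ≠ z →
      ∃ c0 : Sym2 U → Fin 3,
        ProperOn (G.edgeSet \ {s(s, w), s(w, t)}) ({s, w, t} : Set U) c0 ∧
        c0 s(s, sa) = y ∧ c0 s(s, sb) = z ∧ c0 s(w, vC) = x ∧
        c0 s(t, ta) = x ∧ c0 s(t, tb) = x)
    (m c : ℕ) [NeZero m]
    (hm : Even m) (hmc : Even (m / Nat.gcd m c))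
    (hc1 : 1 ≤ c) (hc2 : 2 * c < m)
    (H : SimpleGraph (U × ZMod m))
    (hint : ∀ (i : ZMod m) (u u' : U),
      H.Adj (u, i) (u', i) ↔ (G.Adj u u' ∧ u ≠ s ∧ u ≠ t ∧ u' ≠ s ∧ u' ≠ t))
    (hcross : ∀ (i j : ZMod m), i ≠ j → ∀ u u' : U,
      H.Adj (u, i) (u', j) ↔
        ((j = i + 1 ∧ ((u = ta ∧ u' = sa) ∨ (u = tb ∧ u' = sb))) ∨
         (i = j + 1 ∧ ((u' = ta ∧ u = sa) ∨ (u' = tb ∧ u = sb))) ∨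
         (u = w ∧ u' = w ∧ (j = i + (c : ZMod m) ∨ i = j + (c : ZMod m))))) :
    ∃ col : Sym2 (U × ZMod m) → Fin 3,
      ProperOn H.edgeSet (∅ : Set (U × ZMod m)) col := by
  obtain ⟨c0L, hLp, hLsa, hLsb, hLw, hLta, hLtb⟩ :=
    hTwoLeft 0 1 2 (by decide) (by decide) (by decide)
  obtain ⟨c0R, hRp, hRsa, hRsb, hRw, hRta, hRtb⟩ :=
    hTwoRight 0 1 2 (by decide) (by decide) (by decide)
  obtain ⟨parity, hparity⟩ : ∃ f : ZMod m → Bool, ∀ i, f (i + 1) = !f i := by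
    simpa using ZMod.exists_map_add_natCast_eq_not (m := m) (c := 1) (by simpa using hm)
  obtain ⟨loop, hloop⟩ := ZMod.exists_map_add_natCast_eq_not hmc
  obtain ⟨hvCs, -, hvCt⟩ := houter vC (by simp)
  refine exists_properOn_of_alphaLiftAdj (fun _ _ => alphaLiftAdj_of_adj hint hcross)
    (fun _ => G.eq_or_eq_or_eq_of_adj_of_degree_eq_three (hcubic w) hsw.symm hwt hvC hst
      (Ne.symm hvCs) (Ne.symm hvCt))
    hst hsw.ne hwt.ne hvC.ne' hsa hsb hsab hta htb htab (fun u hu => houter u (by aesop))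
    (by exact_mod_cast ZMod.natCast_ne_zero_of_lt two_ne_zero (by omega))
    (by exact_mod_cast ZMod.natCast_ne_zero_of_lt (by omega) hc2)
    (fun i => if parity i then c0L else c0R) (fun i => by split <;> assumption)
    (fun i => by split <;> assumption)
    (fun i => by cases h : parity i <;> simp [hparity, h, hLta, hLsa, hRta, hRsa])
    (fun i => by cases h : parity i <;> simp [hparity, h, hLtb, hLsb, hRtb, hRsb])
    (fun i => if loop i then 1 else 2) (fun i => by split <;> decide)
    (fun i => by cases h : loop i <;> simp [hloop, h])
end

section
/- If a color string C of length m (over colors {1,2,3}) assigned to the spokes of G_α(m;1,1,1) contains, cyclically, a substring of the form x y...y x with an odd number (≥1) of y's, where x ≠ y, then the induced coloring of the inner loop m-cycle requires a fourth color; consequently the string index χ_C equals 4. -/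
/-!
The loop edges `w_{i₀+j} w_{i₀+j+1}`, `0 ≤ j ≤ k`, each meet a `y`-spoke, so they are colored
with the two colors other than `y`, alternately. As `k` is odd, the first and the last of them
get different colors; but both also avoid `x` (they meet the two `x`-spokes), leaving them
only the third color.
-/

theorem Fin3.eq_of_ne_of_ne {a b c y : Fin 3} (hay : a ≠ y) (hby : b ≠ y) (hcy : c ≠ y)
    (hab : a ≠ b) (hbc : b ≠ c) : a = c := by
  revert a b c y; decide

theorem Fin3.ne_of_alternating_odd {f : ℕ → Fin 3} {y : Fin 3} {k : ℕ} (hk : Odd k)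
    (hy : ∀ j ≤ k, f j ≠ y) (hne : ∀ j < k, f j ≠ f (j + 1)) : f k ≠ f 0 := by
  obtain ⟨i, rfl⟩ := hk
  induction i with
  | zero => exact (hne 0 (by omega)).symm
  | succ i ih =>
    have hstep : f (2 * i + 1) = f (2 * (i + 1) + 1) :=
      Fin3.eq_of_ne_of_ne (hy _ (by omega)) (hy (2 * i + 2) (by omega)) (hy _ le_rfl)
        (hne _ (by omega)) (hne _ (by omega))
    rw [← hstep]
    exact ih (fun j hj => hy j (by omega)) (fun j hj => hne j (by omega))

/-- `L i` is the color of the loop edge `wᵢ w_{i+1}`, and `C i` that of spoke `i`. -/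
theorem forbidden_substring_xyx_general (m : ℕ)
    (C : ZMod m → Fin 3) (x y : Fin 3) (hxy : x ≠ y)
    (i₀ : ZMod m) (k : ℕ) (hk : Odd k)
    (hstart : C i₀ = x)
    (hend : C (i₀ + (k : ZMod m) + 1) = x)
    (hmid : ∀ j : ℕ, 1 ≤ j → j ≤ k → C (i₀ + (j : ZMod m)) = y) :
    ¬ ∃ L : ZMod m → Fin 3,
        ∀ i : ZMod m, L i ≠ C i ∧ L i ≠ C (i + 1) ∧ L i ≠ L (i + 1) := by
  rintro ⟨L, hL⟩
  have hsucc (j : ℕ) : i₀ + ((j + 1 : ℕ) : ZMod m) = i₀ + j + 1 := by push_cast; ring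
  have hy (j : ℕ) (hj : j ≤ k) : L (i₀ + j) ≠ y := by
    rcases Nat.eq_zero_or_pos j with rfl | hj0
    · have := (hL (i₀ + (0 : ℕ))).2.1
      rwa [← hsucc, hmid 1 le_rfl hk.pos] at this
    · exact hmid j hj0 hj ▸ (hL _).1
  have hne (j : ℕ) (_ : j < k) : L (i₀ + j) ≠ L (i₀ + (j + 1 : ℕ)) := hsucc j ▸ (hL _).2.2
  have hfirst : L (i₀ + (0 : ℕ)) ≠ x := by simpa [hstart] using (hL i₀).1
  have hlast : L (i₀ + k) ≠ x := hend ▸ (hL _).2.1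
  exact Fin3.ne_of_alternating_odd (f := fun j => L (i₀ + j)) hk hy hne
    (Fin3.eq_of_ne_of_ne (hy 0 k.zero_le) hxy (hy k le_rfl) hfirst hlast.symm).symm

/-- If the spoke color string `C` of `G_α(m;1,1,1)` contains (cyclically) a
substring `x y ⋯ y x` with an odd number (≥ 1) of `y`'s, `x ≠ y`, then the
induced coloring of the inner loop `m`-cycle requires a fourth color: there is
no assignment `L` of colors to the loop edges (`L i` colors the edge
`wᵢ w_{i+1}`) avoiding the two incident spoke colors and the adjacent loop
edge colors.  Consequently the string index `χ_C = 4`. -/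
theorem forbidden_substring_xyx (m : ℕ) [NeZero m] (hm : 3 ≤ m)
    (C : ZMod m → Fin 3) (x y : Fin 3) (hxy : x ≠ y)
    (i₀ : ZMod m) (k : ℕ) (hk : Odd k) (hk1 : 1 ≤ k) (hkm : k + 2 ≤ m)
    (hstart : C i₀ = x)
    (hend : C (i₀ + (k : ZMod m) + 1) = x)
    (hmid : ∀ j : ℕ, 1 ≤ j → j ≤ k → C (i₀ + (j : ZMod m)) = y) :
    ¬ ∃ L : ZMod m → Fin 3,
        ∀ i : ZMod m, L i ≠ C i ∧ L i ≠ C (i + 1) ∧ L i ≠ L (i + 1) :=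
  forbidden_substring_xyx_general m C x y hxy i₀ k hk hstart hend hmid
end

section
/- If a cyclic color string C of length m over {1,2,3} contains a substring of the form x y...y z with an even number (≥2) of y's, where x, y, z are pairwise distinct, then there is no assignment of colors from {1,2,3} to the edges of the inner loop m-cycle such that each loop edge w_i w_{i+1} differs from c_i, c_{i+1}, and its two neighboring loop edges. -/
/-!
Along the run of `y`'s every loop edge must avoid `y`, so consecutive loop edges
use the two other colors alternately. The edge before the first `y` spoke sits
between spokes `x` and `y`, hence gets `z`; as the run has even length, the last
edge inside the run then gets `x`, and the edge between the last `y` spoke and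
the `z` spoke is left with no color.
-/

theorem Fin.three_eq_of_ne {a b c w : Fin 3} (hab : a ≠ b) (hac : a ≠ c) (hbc : b ≠ c)
    (hwa : w ≠ a) (hwb : w ≠ b) : w = c := by
  omega

/-- `L i` colors the loop edge `wᵢ w_{i+1}`, `C i` the spoke at `wᵢ`. -/
def LoopCompatible {ι : Type*} [Add ι] [One ι] (C L : ι → Fin 3) : Prop :=
  ∀ i, L i ≠ C i ∧ L i ≠ C (i + 1) ∧ L i ≠ L (i + 1)

theorem LoopCompatible.shift {R : Type*} [AddMonoidWithOne R] {C L : R → Fin 3}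
    (hL : LoopCompatible C L) (i₀ : R) :
    LoopCompatible (fun j : ℕ ↦ C (i₀ + j)) (fun j : ℕ ↦ L (i₀ + j)) := by
  intro j
  dsimp only
  rw [Nat.cast_add_one, ← add_assoc]
  exact hL _

section RunOfY

variable {c l : ℕ → Fin 3} {y : Fin 3}

theorem LoopCompatible.eq_of_spokes_eq (hL : LoopCompatible c l) {j : ℕ}
    (h₁ : c (j + 1) = y) (h₂ : c (j + 2) = y) : l (j + 2) = l j := by
  obtain ⟨-, hj, hjj⟩ := hL j
  obtain ⟨hj', -, hjj'⟩ := hL (j + 1)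
  obtain ⟨hj'', -, -⟩ := hL (j + 2)
  rw [h₁] at hj hj'
  rw [h₂] at hj''
  exact Fin.three_eq_of_ne (Ne.symm hj') (Ne.symm hj) (Ne.symm hjj) hj'' (Ne.symm hjj')

theorem LoopCompatible.apply_odd_eq_apply_one (hL : LoopCompatible c l) {k : ℕ}
    (hrun : ∀ j, 1 ≤ j → j ≤ k → c j = y) :
    ∀ i, 2 * i + 1 ≤ k → l (2 * i + 1) = l 1
  | 0, _ => rfl
  | i + 1, hi => by
    rw [show 2 * (i + 1) + 1 = 2 * i + 1 + 2 by ring,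
      hL.eq_of_spokes_eq (hrun _ (by omega) (by omega)) (hrun _ (by omega) (by omega)),
      hL.apply_odd_eq_apply_one hrun i (by omega)]

theorem not_loopCompatible_of_even_run {x z : Fin 3}
    (hxy : x ≠ y) (hxz : x ≠ z) (hyz : y ≠ z) {k : ℕ} (hk : Even k) (hk1 : 2 ≤ k)
    (hstart : c 0 = x) (hrun : ∀ j, 1 ≤ j → j ≤ k → c j = y) (hend : c (k + 1) = z) :
    ¬ LoopCompatible c l := by
  intro hL
  obtain ⟨r, rfl⟩ := hk
  obtain ⟨i, rfl⟩ : ∃ i, r = i + 1 := ⟨r - 1, by omega⟩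
  rw [show i + 1 + (i + 1) = 2 * i + 2 by ring] at hrun hend
  have hc1 := hrun 1 le_rfl (by omega)
  have hl0 : l 0 = z := by
    obtain ⟨h₀, h₁, -⟩ := hL 0
    rw [hstart] at h₀
    rw [zero_add, hc1] at h₁
    exact Fin.three_eq_of_ne hxy hxz hyz h₀ h₁
  have hl1 : l 1 = x := by
    obtain ⟨h₁, -, -⟩ := hL 1
    obtain ⟨-, -, h₀₁⟩ := hL 0
    rw [hc1] at h₁
    rw [hl0, zero_add] at h₀₁
    exact Fin.three_eq_of_ne hyz hxy.symm hxz.symm h₁ h₀₁.symm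
  have hlast : l (2 * i + 1) = x := (hL.apply_odd_eq_apply_one hrun i (by omega)).trans hl1
  obtain ⟨hy, hz, -⟩ := hL (2 * i + 2)
  obtain ⟨-, -, hx⟩ := hL (2 * i + 1)
  rw [hrun _ (by omega) le_rfl] at hy
  rw [hend] at hz
  rw [hlast] at hx
  exact hx (Fin.three_eq_of_ne hyz hxy.symm hxz.symm hy hz).symm

end RunOfY

theorem forbidden_substring_xyyz_general (m : ℕ)
    (C : ZMod m → Fin 3) (x y z : Fin 3)
    (hxy : x ≠ y) (hxz : x ≠ z) (hyz : y ≠ z)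
    (i₀ : ZMod m) (k : ℕ) (hk : Even k) (hk1 : 2 ≤ k)
    (hstart : C i₀ = x)
    (hend : C (i₀ + (k : ZMod m) + 1) = z)
    (hmid : ∀ j : ℕ, 1 ≤ j → j ≤ k → C (i₀ + (j : ZMod m)) = y) :
    ¬ ∃ L : ZMod m → Fin 3,
        ∀ i : ZMod m, L i ≠ C i ∧ L i ≠ C (i + 1) ∧ L i ≠ L (i + 1) := by
  rintro ⟨L, hL⟩
  refine not_loopCompatible_of_even_run hxy hxz hyz hk hk1 ?_ hmid ?_
    (LoopCompatible.shift hL i₀)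
  · simpa using hstart
  · simpa only [Nat.cast_add_one, ← add_assoc] using hend

/-- If the cyclic color string `C` contains a substring `x y ⋯ y z` with an even
number (≥ 2) of `y`'s and `x, y, z` pairwise distinct, then there is no
assignment `L` of colors to the edges of the inner loop `m`-cycle (`L i` colors
the edge `wᵢ w_{i+1}`) such that each loop edge avoids the colors of the two
incident spokes and of the adjacent loop edges. -/
theorem forbidden_substring_xyyz (m : ℕ) [NeZero m] (hm : 3 ≤ m)
    (C : ZMod m → Fin 3) (x y z : Fin 3)
    (hxy : x ≠ y) (hxz : x ≠ z) (hyz : y ≠ z)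
    (i₀ : ZMod m) (k : ℕ) (hk : Even k) (hk1 : 2 ≤ k) (hkm : k + 2 ≤ m)
    (hstart : C i₀ = x)
    (hend : C (i₀ + (k : ZMod m) + 1) = z)
    (hmid : ∀ j : ℕ, 1 ≤ j → j ≤ k → C (i₀ + (j : ZMod m)) = y) :
    ¬ ∃ L : ZMod m → Fin 3,
        ∀ i : ZMod m, L i ≠ C i ∧ L i ≠ C (i + 1) ∧ L i ≠ L (i + 1) :=
  forbidden_substring_xyyz_general m C x y z hxy hxz hyz i₀ k hk hk1 hstart hend hmid
end

section
/- Let G be a 5-pole whose only admissible color patterns are TwoLeft, TwoRight, AltTop, and AltBot (in each of which the spoke receives the color repeated among the four connecting semiedges). Then for every odd m ≥ 3, the Z_m lift G_α(m; 1, 1, 1) is a snark (has chromatic index 4). -/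
/-- The four color patterns `TwoLeft` `[(x,x),(y,z)]`, `TwoRight` `[(y,z),(x,x)]`,
`AltTop` `[(x,y),(x,z)]` and `AltBot` `[(y,x),(z,x)]`, always with the spoke
colored `x` (as `y,z` range over both orderings of the two colors other than `x`,
this covers all variants). -/
def AdmissiblePattern (x : Fin 3) (inp out : Fin 3 × Fin 3) : Prop :=
  ∃ y z : Fin 3, y ≠ z ∧ y ≠ x ∧ z ≠ x ∧
    ((inp = (x, x) ∧ out = (y, z)) ∨
     (inp = (y, z) ∧ out = (x, x)) ∨
     (inp = (x, y) ∧ out = (x, z)) ∨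
     (inp = (y, x) ∧ out = (z, x)))

/-!
Suppose the lift is properly 3-edge-coloured. The `i`-th copy of the 5-pole, read off between layer `i` and layer
`i + 2`, is properly coloured, so it carries one of the admissible patterns, and its spoke and the
two edges of the `w`-cycle at its centre get three different colours. Now read the colours of the
three edges cut between consecutive copies (the `w`-cycle edge `e` and the cross edges `p`, `q`) in
`ZMod 3`: the charge `e + p + q + (e - p) (p - q) (q - e)` is nonzero and changes sign across every
copy, which is impossible around a cycle of odd length `m`.
-/

open Function

instance (x : Fin 3) (inp out : Fin 3 × Fin 3) : Decidable (AdmissiblePattern x inp out) := by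
  unfold AdmissiblePattern; infer_instance

/-- On a cut coloured `a, a, b` the charge is `b - a`, and an admissible block swaps the repeated
colour for the third one; on a rainbow cut it is the Vandermonde sign of the colouring, which an
admissible block reverses. -/
def cutCharge (e p q : Fin 3) : ZMod 3 :=
  e.val + p.val + q.val + (e.val - p.val) * (p.val - q.val) * (q.val - e.val)

theorem cutCharge_step : ∀ e p q e' p' q' x : Fin 3, e ≠ e' → x ≠ e → x ≠ e' →
    AdmissiblePattern x (p, q) (p', q') →
      cutCharge e' p' q' = -cutCharge e p q ∧ cutCharge e p q ≠ 0 := by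
  decide

theorem Function.Antiperiodic.eq_neg_of_odd {m : ℕ} (hm : Odd m) {β : Type*} [InvolutiveNeg β]
    {f : ZMod m → β} (hf : Antiperiodic f 1) (i : ZMod m) : f i = -f i := by
  obtain ⟨k, rfl⟩ := hm
  simpa using hf.odd_nsmul_antiperiodic k i

theorem even_of_admissible_cycle {m : ℕ} (e x p q : ZMod m → Fin 3)
    (hcycle : ∀ i, e i ≠ e (i + 1) ∧ x i ≠ e i ∧ x i ≠ e (i + 1))
    (hpatterns : ∀ i, AdmissiblePattern (x i) (p i, q i) (p (i + 1), q (i + 1))) : Even m := by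
  by_contra hodd
  have hstep (i : ZMod m) :=
    cutCharge_step _ _ _ _ _ _ _ (hcycle i).1 (hcycle i).2.1 (hcycle i).2.2 (hpatterns i)
  have hF : Antiperiodic (fun i => cutCharge (e i) (p i) (q i)) 1 := fun i => (hstep i).1
  have hneg : ∀ a : ZMod 3, a = -a → a = 0 := by decide
  exact (hstep 0).2 (hneg _ (hF.eq_neg_of_odd (Nat.not_even_iff_odd.mp hodd) 0))

theorem SimpleGraph.eq_or_eq_or_eq_of_degree_eq_three {V : Type*} {G : SimpleGraph V}
    {v a b c : V} [Fintype (G.neighborSet v)] (hdeg : G.degree v = 3)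
    (ha : G.Adj v a) (hb : G.Adj v b) (hc : G.Adj v c)
    (hab : a ≠ b) (hac : a ≠ c) (hbc : b ≠ c)
    ⦃u : V⦄ (hu : G.Adj v u) : u = a ∨ u = b ∨ u = c := by
  classical
  have hsub : {a, b, c} ⊆ G.neighborFinset v := by
    simp [Finset.insert_subset_iff, ha, hb, hc]
  have hcard : (G.neighborFinset v).card ≤ ({a, b, c} : Finset V).card := by
    rw [G.card_neighborFinset_eq_degree, hdeg,
      Finset.card_eq_three.mpr ⟨a, b, c, hab, hac, hbc, rfl⟩]
  have hu' := (G.mem_neighborFinset v u).mpr hu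
  rw [← Finset.eq_of_subset_of_card_le hsub hcard] at hu'
  simpa using hu'

def Sym2.liftEndpoints {α β : Type*} (f : α → α → β) : Sym2 α → Sym2 β :=
  Sym2.lift ⟨fun u v => s(f u v, f v u), fun _ _ => Sym2.eq_swap⟩

@[simp]
theorem Sym2.liftEndpoints_mk {α β : Type*} (f : α → α → β) (u v : α) :
    Sym2.liftEndpoints f s(u, v) = s(f u v, f v u) :=
  rfl

section ProperOn

variable {V : Type*} {E : Set (Sym2 V)} {X : Set V} {c : Sym2 V → Fin 3}

theorem ProperOn.apply_ne (hc : ProperOn E X c) {v a b : V} (hv : v ∉ X) (ha : s(v, a) ∈ E)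
    (hb : s(v, b) ∈ E) (hab : a ≠ b) : c s(v, a) ≠ c s(v, b) :=
  hc _ ha _ hb (Sym2.congr_right.not.mpr hab)
    ⟨v, hv, Sym2.mem_mk_left _ _, Sym2.mem_mk_left _ _⟩

theorem ProperOn.cycle_spoke_pairwise_ne {U : Type*} {m : ℕ} {H : SimpleGraph (U × ZMod m)}
    {col : Sym2 (U × ZMod m) → Fin 3} (hcol : ProperOn H.edgeSet ∅ col) {w vC : U}
    (hvC : vC ≠ w) (h2 : (2 : ZMod m) ≠ 0) (hcycle : ∀ i, H.Adj (w, i) (w, i + 1))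
    (hspoke : ∀ i, H.Adj (w, i) (vC, i)) (i : ZMod m) :
    col s((w, i), (w, i + 1)) ≠ col s((w, i + 1), (w, i + 1 + 1)) ∧
      col s((w, i + 1), (vC, i + 1)) ≠ col s((w, i), (w, i + 1)) ∧
      col s((w, i + 1), (vC, i + 1)) ≠ col s((w, i + 1), (w, i + 1 + 1)) := by
  have hprev : s((w, i + 1), (w, i)) ∈ H.edgeSet := (hcycle i).symm
  have hnext : s((w, i + 1), (w, i + 1 + 1)) ∈ H.edgeSet := hcycle (i + 1)
  have hvC' : s((w, i + 1), (vC, i + 1)) ∈ H.edgeSet := hspoke (i + 1)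
  rw [Sym2.eq_swap (a := (w, i))]
  exact ⟨hcol.apply_ne (Set.notMem_empty _) hprev hnext
      (by simp [Prod.ext_iff, add_assoc, one_add_one_eq_two, h2]),
    hcol.apply_ne (Set.notMem_empty _) hvC' hprev (by simp [hvC]),
    hcol.apply_ne (Set.notMem_empty _) hvC' hnext (by simp [hvC])⟩

theorem ProperOn.comp_liftEndpoints {V' : Type*} {E' : Set (Sym2 V')} {X' : Set V'}
    {c : Sym2 V' → Fin 3} (hc : ProperOn E' X' c) {f : V → V → V'}
    (hmaps : ∀ u v, s(u, v) ∈ E → s(f u v, f v u) ∈ E')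
    (hconst : ∀ v ∉ X, ∀ a b, f v a = f v b) (hX : ∀ v ∉ X, ∀ a, f v a ∉ X')
    (hinj : ∀ v a b, f a v = f b v → a = b) : ProperOn E X (c ∘ Sym2.liftEndpoints f) := by
  rintro e₁ he₁ e₂ he₂ hne ⟨v, hv, hv₁, hv₂⟩
  obtain ⟨a, rfl⟩ := Sym2.mem_iff_exists.mp hv₁
  obtain ⟨b, rfl⟩ := Sym2.mem_iff_exists.mp hv₂
  have hab : f a v ≠ f b v := fun h => hne (by rw [hinj v a b h])
  simp only [comp_apply, Sym2.liftEndpoints_mk, hconst v hv a b] at hmaps ⊢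
  exact hc.apply_ne (hX v hv b) (hconst v hv a b ▸ hmaps v a he₁) (hmaps v b he₂) hab

end ProperOn

section Layer

variable {U : Type*} {G : SimpleGraph U} {s w t sa sb ta tb : U}

theorem ne_of_mem_fivePole (hNs : ∀ v, G.Adj s v → v = w ∨ v = sa ∨ v = sb)
    (hNt : ∀ v, G.Adj t v → v = w ∨ v = ta ∨ v = tb)
    (hports : ∀ u ∈ ({sa, sb, ta, tb} : Set U), u ≠ s ∧ u ≠ t) {u v : U}
    (huv : s(u, v) ∈ G.edgeSet \ {s(s, w), s(w, t)}) (hu : u = s ∨ u = t) :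
    v ≠ s ∧ v ≠ t := by
  obtain ⟨hadj, hne⟩ := huv
  simp only [Set.mem_insert_iff, Set.mem_singleton_iff, not_or] at hne
  rcases hu with rfl | rfl
  · rcases hNs v hadj with rfl | rfl | rfl
    exacts [absurd rfl hne.1, hports _ (by simp), hports _ (by simp)]
  · rcases hNt v hadj with rfl | rfl | rfl
    exacts [absurd Sym2.eq_swap hne.2, hports _ (by simp), hports _ (by simp)]

variable [DecidableEq U] {m : ℕ}

/-- Where the end `u` of the edge `uv` of the 5-pole lands in its `i`-th copy. This copy occupies
layer `i + 1` of the lift; its input edges at `s` are the cross edges from layer `i`, its output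
edges at `t` those into layer `i + 2`. -/
def layerEnd (s t sa sb ta tb : U) (i : ZMod m) (u v : U) : U × ZMod m :=
  if u = s then (if v = sa then ta else tb, i)
  else if u = t then (if v = ta then sa else sb, i + 2)
  else (u, i + 1)

variable {i : ZMod m}

theorem layerEnd_of_ne {u : U} (hs : u ≠ s) (ht : u ≠ t) (v : U) :
    layerEnd s t sa sb ta tb i u v = (u, i + 1) := by
  simp [layerEnd, hs, ht]

theorem layerEnd_left_injective (h2 : (2 : ZMod m) ≠ 0) {v a b : U}
    (h : layerEnd s t sa sb ta tb i a v = layerEnd s t sa sb ta tb i b v) : a = b := by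
  have h1 : (1 : ZMod m) ≠ 0 := fun h1 => h2 (by rw [← one_add_one_eq_two, h1, add_zero])
  have h12 : (1 : ZMod m) ≠ 2 := fun h12 => h1 (by simpa [← one_add_one_eq_two] using h12.symm)
  unfold layerEnd at h
  split_ifs at h <;> simp_all [Prod.ext_iff]

variable {H : SimpleGraph (U × ZMod m)}

theorem adj_layerEnd_of_ne (hNs : ∀ v, G.Adj s v → v = w ∨ v = sa ∨ v = sb)
    (hNt : ∀ v, G.Adj t v → v = w ∨ v = ta ∨ v = tb) (hsab : sa ≠ sb) (htab : ta ≠ tb)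
    (hlayer : ∀ i u v, G.Adj u v → u ≠ s → u ≠ t → v ≠ s → v ≠ t →
      H.Adj (u, i) (v, i))
    (hcrossA : ∀ i, H.Adj (ta, i) (sa, i + 1)) (hcrossB : ∀ i, H.Adj (tb, i) (sb, i + 1))
    {u v : U} (huv : s(u, v) ∈ G.edgeSet \ {s(s, w), s(w, t)}) (hvs : v ≠ s) (hvt : v ≠ t) :
    H.Adj (layerEnd s t sa sb ta tb i u v) (v, i + 1) := by
  obtain ⟨hadj, hne⟩ := huv
  simp only [Set.mem_insert_iff, Set.mem_singleton_iff, not_or] at hne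
  by_cases hus : u = s
  · subst hus
    rcases hNs v hadj with rfl | rfl | rfl
    · exact absurd rfl hne.1
    · simpa [layerEnd] using hcrossA i
    · simpa [layerEnd, hsab.symm] using hcrossB i
  by_cases hut : u = t
  · subst hut
    have htwo : i + 1 + 1 = i + 2 := by rw [add_assoc, one_add_one_eq_two]
    rcases hNt v hadj with rfl | rfl | rfl
    · exact absurd Sym2.eq_swap hne.2
    · simpa [layerEnd, hus, htwo] using (hcrossA (i + 1)).symm
    · simpa [layerEnd, hus, htab.symm, htwo] using (hcrossB (i + 1)).symm
  rw [layerEnd_of_ne hus hut]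
  exact hlayer (i + 1) u v hadj hus hut hvs hvt

theorem adj_layerEnd (hNs : ∀ v, G.Adj s v → v = w ∨ v = sa ∨ v = sb)
    (hNt : ∀ v, G.Adj t v → v = w ∨ v = ta ∨ v = tb)
    (hports : ∀ u ∈ ({sa, sb, ta, tb} : Set U), u ≠ s ∧ u ≠ t)
    (hsab : sa ≠ sb) (htab : ta ≠ tb)
    (hlayer : ∀ i u v, G.Adj u v → u ≠ s → u ≠ t → v ≠ s → v ≠ t →
      H.Adj (u, i) (v, i))
    (hcrossA : ∀ i, H.Adj (ta, i) (sa, i + 1)) (hcrossB : ∀ i, H.Adj (tb, i) (sb, i + 1))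
    (u v : U) (huv : s(u, v) ∈ G.edgeSet \ {s(s, w), s(w, t)}) :
    H.Adj (layerEnd s t sa sb ta tb i u v) (layerEnd s t sa sb ta tb i v u) := by
  by_cases hv : v ≠ s ∧ v ≠ t
  · rw [layerEnd_of_ne hv.1 hv.2]
    exact adj_layerEnd_of_ne hNs hNt hsab htab hlayer hcrossA hcrossB huv hv.1 hv.2
  · rw [Sym2.eq_swap (a := u)] at huv
    have hu := ne_of_mem_fivePole hNs hNt hports huv (by tauto)
    rw [layerEnd_of_ne hu.1 hu.2]
    exact (adj_layerEnd_of_ne hNs hNt hsab htab hlayer hcrossA hcrossB huv hu.1 hu.2).symm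

theorem properOn_layer (hNs : ∀ v, G.Adj s v → v = w ∨ v = sa ∨ v = sb)
    (hNt : ∀ v, G.Adj t v → v = w ∨ v = ta ∨ v = tb)
    (hports : ∀ u ∈ ({sa, sb, ta, tb} : Set U), u ≠ s ∧ u ≠ t)
    (hsab : sa ≠ sb) (htab : ta ≠ tb)
    (hlayer : ∀ i u v, G.Adj u v → u ≠ s → u ≠ t → v ≠ s → v ≠ t →
      H.Adj (u, i) (v, i))
    (hcrossA : ∀ i, H.Adj (ta, i) (sa, i + 1)) (hcrossB : ∀ i, H.Adj (tb, i) (sb, i + 1))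
    (h2 : (2 : ZMod m) ≠ 0) {col : Sym2 (U × ZMod m) → Fin 3}
    (hcol : ProperOn H.edgeSet ∅ col) (i : ZMod m) :
    ProperOn (G.edgeSet \ {s(s, w), s(w, t)}) {s, w, t}
      (col ∘ Sym2.liftEndpoints (layerEnd s t sa sb ta tb i)) := by
  refine hcol.comp_liftEndpoints
    (adj_layerEnd hNs hNt hports hsab htab hlayer hcrossA hcrossB) (fun v hv a b => ?_)
    (fun _ _ _ => Set.notMem_empty _) (fun _ _ _ => layerEnd_left_injective h2)
  simp only [Set.mem_insert_iff, Set.mem_singleton_iff, not_or] at hv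
  rw [layerEnd_of_ne hv.1 hv.2.2, layerEnd_of_ne hv.1 hv.2.2]

end Layer

theorem G_alpha_odd_lift_snark_general {U : Type*} [Fintype U] [DecidableEq U]
    (G : SimpleGraph U) [DecidableRel G.Adj]
    (hcubic : ∀ v : U, G.degree v = 3)
    (s w t sa sb ta tb vC : U)
    (hsw : G.Adj s w) (hwt : G.Adj w t) (hst : s ≠ t)
    (hsa : G.Adj s sa) (hsb : G.Adj s sb) (hsab : sa ≠ sb)
    (hta : G.Adj t ta) (htb : G.Adj t tb) (htab : ta ≠ tb)
    (hvC : G.Adj w vC)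
    (houter : ∀ u ∈ ({sa, sb, ta, tb, vC} : Set U), u ≠ s ∧ u ≠ w ∧ u ≠ t)
    -- the only admissible color patterns of the 5-pole are the four pattern types
    (honly : ∀ c0 : Sym2 U → Fin 3,
      ProperOn (G.edgeSet \ {s(s, w), s(w, t)}) ({s, w, t} : Set U) c0 →
      AdmissiblePattern (c0 s(w, vC)) (c0 s(s, sa), c0 s(s, sb))
        (c0 s(t, ta), c0 s(t, tb)))
    (m : ℕ) (hmodd : Odd m) (hm : 3 ≤ m)
    (H : SimpleGraph (U × ZMod m))
    (hint : ∀ (i : ZMod m) (u u' : U),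
      H.Adj (u, i) (u', i) ↔ (G.Adj u u' ∧ u ≠ s ∧ u ≠ t ∧ u' ≠ s ∧ u' ≠ t))
    (hcross : ∀ (i j : ZMod m), i ≠ j → ∀ u u' : U,
      H.Adj (u, i) (u', j) ↔
        ((j = i + 1 ∧ ((u = ta ∧ u' = sa) ∨ (u = tb ∧ u' = sb))) ∨
         (i = j + 1 ∧ ((u' = ta ∧ u = sa) ∨ (u' = tb ∧ u = sb))) ∨
         (u = w ∧ u' = w ∧ (j = i + 1 ∨ i = j + 1)))) :
    ¬ ∃ col : Sym2 (U × ZMod m) → Fin 3,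
        ProperOn H.edgeSet (∅ : Set (U × ZMod m)) col := by
  rintro ⟨col, hcol⟩
  obtain ⟨hsas, hsaw, hsat⟩ := houter sa (by simp)
  obtain ⟨hsbs, hsbw, hsbt⟩ := houter sb (by simp)
  obtain ⟨htas, htaw, htat⟩ := houter ta (by simp)
  obtain ⟨htbs, htbw, htbt⟩ := houter tb (by simp)
  obtain ⟨hvCs, hvCw, hvCt⟩ := houter vC (by simp)
  have h2 : (2 : ZMod m) ≠ 0 := by
    rw [← Nat.cast_ofNat, Ne, ZMod.natCast_eq_zero_iff]
    exact Nat.not_dvd_of_pos_of_lt two_pos (by omega)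
  have h1 : (1 : ZMod m) ≠ 0 := fun h1 => h2 (by rw [← one_add_one_eq_two, h1, add_zero])
  have hcross_succ (i : ZMod m) (u v : U)
      (h : u = ta ∧ v = sa ∨ u = tb ∧ v = sb ∨ u = w ∧ v = w) : H.Adj (u, i) (v, i + 1) :=
    (hcross _ _ (left_ne_add.mpr h1) u v).2 (by tauto)
  have hlayer := properOn_layer (w := w) (H := H)
    (G.eq_or_eq_or_eq_of_degree_eq_three (hcubic s) hsw hsa hsb hsaw.symm hsbw.symm hsab)
    (G.eq_or_eq_or_eq_of_degree_eq_three (hcubic t) hwt.symm hta htb htaw.symm htbw.symm htab)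
    (by simp_all) hsab htab (fun i u v h => ((hint i u v).2 ⟨h, ·, ·, ·, ·⟩))
    (hcross_succ · _ _ (by simp)) (hcross_succ · _ _ (by simp)) h2 hcol
  refine Nat.not_even_iff_odd.mpr hmodd <| even_of_admissible_cycle
    (fun i => col s((w, i), (w, i + 1))) (fun i => col s((w, i + 1), (vC, i + 1)))
    (fun i => col s((ta, i), (sa, i + 1))) (fun i => col s((tb, i), (sb, i + 1)))
    (hcol.cycle_spoke_pairwise_ne hvCw h2 (hcross_succ · w w (by simp))
      fun i => (hint i w vC).2 ⟨hvC, hsw.ne', hwt.ne, hvCs, hvCt⟩) fun i => ?_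
  simpa [layerEnd, hsw.ne', hwt.ne, hst.symm, hvCs, hvCt, hsas, hsat, hsbs, hsbt, htas, htat,
    htbs, htbt, hsab.symm, htab.symm, Sym2.eq_swap, add_assoc, one_add_one_eq_two]
    using honly _ (hlayer i)

/-- **Theorem 5.2 (generalized).**  Let `G` be a cubic graph containing a path
`s — w — t`, yielding a 5-pole with input pair `A = s·sa`, `B = s·sb`, output
pair `A' = t·ta`, `B' = t·tb`, and spoke `C = w·vC`, whose only admissible color
patterns are `TwoLeft`, `TwoRight`, `AltTop` and `AltBot` (in each of which the
spoke receives the repeated color).  Then for every odd `m ≥ 3`, the `ZMod m`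
lift `G_α(m; 1, 1, 1)` is a snark: it has no proper 3-edge-coloring. -/
theorem G_alpha_odd_lift_snark {U : Type*} [Fintype U] [DecidableEq U]
    (G : SimpleGraph U) [DecidableRel G.Adj]
    (hcubic : ∀ v : U, G.degree v = 3)
    (s w t sa sb ta tb vC : U)
    (hsw : G.Adj s w) (hwt : G.Adj w t) (hst : s ≠ t)
    (hsa : G.Adj s sa) (hsb : G.Adj s sb) (hsab : sa ≠ sb)
    (hta : G.Adj t ta) (htb : G.Adj t tb) (htab : ta ≠ tb)
    (hvC : G.Adj w vC)
    (houter : ∀ u ∈ ({sa, sb, ta, tb, vC} : Set U), u ≠ s ∧ u ≠ w ∧ u ≠ t)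
    -- the only admissible color patterns of the 5-pole are the four pattern types
    (honly : ∀ c0 : Sym2 U → Fin 3,
      ProperOn (G.edgeSet \ {s(s, w), s(w, t)}) ({s, w, t} : Set U) c0 →
      AdmissiblePattern (c0 s(w, vC)) (c0 s(s, sa), c0 s(s, sb))
        (c0 s(t, ta), c0 s(t, tb)))
    (m : ℕ) [NeZero m] (hmodd : Odd m) (hm : 3 ≤ m)
    (H : SimpleGraph (U × ZMod m))
    (hint : ∀ (i : ZMod m) (u u' : U),
      H.Adj (u, i) (u', i) ↔ (G.Adj u u' ∧ u ≠ s ∧ u ≠ t ∧ u' ≠ s ∧ u' ≠ t))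
    (hcross : ∀ (i j : ZMod m), i ≠ j → ∀ u u' : U,
      H.Adj (u, i) (u', j) ↔
        ((j = i + 1 ∧ ((u = ta ∧ u' = sa) ∨ (u = tb ∧ u' = sb))) ∨
         (i = j + 1 ∧ ((u' = ta ∧ u = sa) ∨ (u' = tb ∧ u = sb))) ∨
         (u = w ∧ u' = w ∧ (j = i + 1 ∨ i = j + 1)))) :
    ¬ ∃ col : Sym2 (U × ZMod m) → Fin 3,
        ProperOn H.edgeSet (∅ : Set (U × ZMod m)) col :=
  G_alpha_odd_lift_snark_general G hcubic s w t sa sb ta tb vC hsw hwt hst hsa hsb hsab hta htb htab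
    hvC houter honly m hmodd hm H hint hcross
end
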